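/- arXiv:1605.00245 — 9 statements merged into one kernel-verified Lean document; each statement's English description precedes it below -/
import Mathlib

section
/- Let X be a Banach space. Then X is uniformly smooth if and only if the pair (X, 𝕂) has the Bishop-Phelps-Bollobás point property; that is, if and only if for every ε > 0 there exists η(ε) > 0 such that whenever x₀* ∈ S_{X*} and x₀ ∈ S_X satisfy |x₀*(x₀)| > 1 − η(ε), there exists x₁* ∈ S_{X*} with |x₁*(x₀)| = 1 and ‖x₁* − x₀*‖ < ε. -/
open RCLike


def UniformlySmooth (𝕜 X : Type*) [RCLike 𝕜] [NormedAddCommGroup X] [NormedSpace 𝕜 X] : Prop :=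
  ∀ ε > (0:ℝ), ∃ δ > (0:ℝ), ∀ t : ℝ, 0 < t → t < δ →
    ∀ x z : X, ‖x‖ ≤ 1 → ‖z‖ = 1 →
      ‖z + (t : 𝕜) • x‖ + ‖z - (t : 𝕜) • x‖ - 2 ≤ ε * t

section Aux

variable {𝕜 X : Type*} [RCLike 𝕜] [NormedAddCommGroup X] [NormedSpace 𝕜 X]

/-- Pick a unimodular scalar rotating `c` onto the positive real axis. -/
lemma exists_phase (c : 𝕜) (hc : c ≠ 0) : ∃ θ : 𝕜, ‖θ‖ = 1 ∧ θ * c = (‖c‖ : 𝕜) := by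
  refine ⟨(‖c‖ : 𝕜) / c, ?_, div_mul_cancel₀ _ hc⟩
  rw [norm_div, RCLike.norm_ofReal, abs_of_nonneg (norm_nonneg c),
    div_self (norm_ne_zero_iff.2 hc)]

lemma sq_le_imp_le {a b : ℝ} (ha : 0 ≤ a) (hb : 0 ≤ b) (h : a ^ 2 ≤ b ^ 2) : a ≤ b := by
  nlinarith

lemma one_le_inv_of_le {a : ℝ} (h0 : 0 < a) (h1 : a ≤ 1) : 1 ≤ a⁻¹ := by
  nlinarith [mul_inv_cancel₀ (ne_of_gt h0), inv_pos.2 h0]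

lemma arith_ratio {A W num d s : ℝ} (hd : 0 ≤ d) (hs : 0 < s) (hA : A * W = num)
    (hApos : 0 < A) (hW : W ≤ 1 + s) (hnum : 1 - d - s < num) : 1 - d - 2 * s < A := by
  nlinarith

lemma arith_sq_bound {d s e : ℝ} (he0 : 0 < e) (he1 : e ≤ 1) (hs1 : s ≤ e ^ 2 / 100)
    (hs0 : 0 < s) (hd1 : d ≤ s * e / 100) :
    2 * d + 4 * s + 2 * (e ^ 2 / 100) ≤ (e / 4) ^ 2 := by
  nlinarith

lemma re_sub' (a b : 𝕜) : re (a - b) = re a - re b := by simp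

lemma re_add' (a b : 𝕜) : re (a + b) = re a + re b := by simp

lemma im_sub' (a b : 𝕜) : im (a - b) = im a - im b := by simp

lemma re_normalize (T : X →L[𝕜] 𝕜) (v : X) :
    re (T (((‖v‖ : 𝕜))⁻¹ • v)) = ‖v‖⁻¹ * re (T v) := by
  rw [map_smul, smul_eq_mul, ← RCLike.ofReal_inv, re_ofReal_mul]

lemma norm_normalize {v : X} (hv : v ≠ 0) : ‖((‖v‖ : 𝕜))⁻¹ • v‖ = 1 := by
  rw [norm_smul, norm_inv, RCLike.norm_ofReal, abs_of_nonneg (norm_nonneg v),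
    inv_mul_cancel₀ (norm_ne_zero_iff.2 hv)]

lemma re_apply_add_smul (T : X →L[𝕜] 𝕜) (a b : X) (s : ℝ) :
    re (T (a + (s : 𝕜) • b)) = re (T a) + s * re (T b) := by
  rw [map_add, map_smul, smul_eq_mul, re_add', re_ofReal_mul]

lemma re_apply_sub_smul (T : X →L[𝕜] 𝕜) (a b : X) (s : ℝ) :
    re (T (a - (s : 𝕜) • b)) = re (T a) - s * re (T b) := by
  rw [map_sub, map_smul, smul_eq_mul, re_sub', re_ofReal_mul]

lemma re_apply_le_one {T : X →L[𝕜] 𝕜} (hT : ‖T‖ = 1) {v : X} (hv : ‖v‖ ≤ 1) :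
    re (T v) ≤ 1 := by
  calc re (T v) ≤ ‖T v‖ := re_le_norm _
  _ ≤ ‖T‖ * ‖v‖ := T.le_opNorm v
  _ ≤ 1 := by rw [hT]; linarith

lemma neg_one_le_re_apply {T : X →L[𝕜] 𝕜} (hT : ‖T‖ = 1) {v : X} (hv : ‖v‖ ≤ 1) :
    -1 ≤ re (T v) := by
  have h1 : |re (T v)| ≤ ‖T v‖ := abs_re_le_norm _
  have h2 : ‖T v‖ ≤ 1 := by
    calc ‖T v‖ ≤ ‖T‖ * ‖v‖ := T.le_opNorm v
    _ ≤ 1 := by rw [hT]; linarith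
  have := abs_le.1 h1
  linarith [this.1]

/-- An operator norm bound from a bound on real parts on the unit ball. -/
lemma opNorm_le_of_re (T : X →L[𝕜] 𝕜) {M : ℝ} (hM : 0 ≤ M)
    (h : ∀ y : X, ‖y‖ ≤ 1 → re (T y) ≤ M) : ‖T‖ ≤ M := by
  refine T.opNorm_le_bound hM fun v => ?_
  rcases eq_or_ne (T v) 0 with h0 | h0
  · rw [h0, norm_zero]
    positivity
  have hv : v ≠ 0 := fun hv => h0 (by simp [hv])
  have hvpos : (0:ℝ) < ‖v‖ := norm_pos_iff.2 hv
  obtain ⟨θ, hθ1, hθ2⟩ := exists_phase (T v) h0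
  have hy : ‖(((‖v‖ : 𝕜))⁻¹ * θ) • v‖ ≤ 1 := by
    rw [norm_smul, norm_mul, norm_inv, RCLike.norm_ofReal, abs_of_nonneg (norm_nonneg v), hθ1,
      mul_one, inv_mul_cancel₀ (ne_of_gt hvpos)]
  have hkey := h _ hy
  rw [map_smul, smul_eq_mul, mul_assoc, hθ2, ← RCLike.ofReal_inv, re_ofReal_mul,
    RCLike.ofReal_re] at hkey
  have hinv : ‖v‖ * ‖v‖⁻¹ = 1 := mul_inv_cancel₀ (ne_of_gt hvpos)
  nlinarith [norm_nonneg (T v)]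

end Aux

section UC

variable {𝕜 X : Type*} [RCLike 𝕜] [NormedAddCommGroup X] [NormedSpace 𝕜 X]

set_option maxHeartbeats 1600000 in
/-- The BPB point property implies a uniform-convexity type property of the dual. -/
lemma uc_of_bpb
    (hB : ∀ ε > (0:ℝ), ∃ η > (0:ℝ), ∀ (f : X →L[𝕜] 𝕜) (x : X), ‖f‖ = 1 → ‖x‖ = 1 →
        1 - η < ‖f x‖ → ∃ g : X →L[𝕜] 𝕜, ‖g‖ = 1 ∧ ‖g x‖ = 1 ∧ ‖g - f‖ < ε)
    {ε : ℝ} (hε0 : 0 < ε) (hε1 : ε ≤ 1) :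
    ∃ δ > (0:ℝ), ∀ f g : X →L[𝕜] 𝕜, ‖f‖ = 1 → ‖g‖ = 1 → 2 - δ < ‖f + g‖ → ‖f - g‖ ≤ ε := by
  obtain ⟨η, hη, hBB⟩ := hB (ε ^ 2 / 100) (by positivity)
  set s : ℝ := min (ε ^ 2 / 100) (η / 4) with hs_def
  have hs : 0 < s := lt_min (by positivity) (by positivity)
  have hs1 : s ≤ ε ^ 2 / 100 := min_le_left _ _
  have hs2 : s ≤ η / 4 := min_le_right _ _
  set δ : ℝ := min (s * ε / 100) (η / 4) with hδ_def
  have hδ : 0 < δ := lt_min (by positivity) (by positivity)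
  have hδ1 : δ ≤ s * ε / 100 := min_le_left _ _
  have hδ2 : δ ≤ η / 4 := min_le_right _ _
  have hs_small : s ≤ 1 / 100 := by nlinarith
  have hδ_small : δ ≤ ε / 100 := by nlinarith [mul_le_mul_of_nonneg_right hs_small (le_of_lt hε0)]
  refine ⟨δ, hδ, fun f g hf hg hfg => ?_⟩
  by_contra hcon
  push_neg at hcon
  -- pick y in the unit ball with re (f y) - re (g y) > ε
  obtain ⟨y₀, hy₀, hy₀2⟩ := (f - g).exists_lt_apply_of_lt_opNorm hcon
  have hc0 : (f - g) y₀ ≠ 0 := by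
    intro h
    rw [h, norm_zero] at hy₀2
    linarith
  obtain ⟨θ, hθ1, hθ2⟩ := exists_phase ((f - g) y₀) hc0
  set y : X := θ • y₀ with hy_def
  have hy : ‖y‖ ≤ 1 := by
    rw [hy_def, norm_smul, hθ1, one_mul]; linarith
  have hfgy : ε < re (f y) - re (g y) := by
    have h1 : (f - g) y = ((‖(f - g) y₀‖ : ℝ) : 𝕜) := by
      rw [hy_def, map_smul, smul_eq_mul, hθ2]
    have h2 : re ((f - g) y) = ‖(f - g) y₀‖ := by rw [h1, RCLike.ofReal_re]
    rw [ContinuousLinearMap.sub_apply, re_sub'] at h2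
    linarith
  -- pick x in the unit sphere with re (f x), re (g x) > 1 - δ
  obtain ⟨x₀, hx₀, hx₀2⟩ := (f + g).exists_lt_apply_of_lt_opNorm hfg
  have hfg0 : (f + g) x₀ ≠ 0 := by
    intro h
    rw [h, norm_zero] at hx₀2
    linarith
  obtain ⟨θ', hθ'1, hθ'2⟩ := exists_phase ((f + g) x₀) hfg0
  set x₁ : X := θ' • x₀ with hx₁_def
  have hx₁ : ‖x₁‖ ≤ 1 := by
    rw [hx₁_def, norm_smul, hθ'1, one_mul]; linarith
  have hsum : 2 - δ < re (f x₁) + re (g x₁) := by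
    have h1 : (f + g) x₁ = ((‖(f + g) x₀‖ : ℝ) : 𝕜) := by
      rw [hx₁_def, map_smul, smul_eq_mul, hθ'2]
    have h2 : re ((f + g) x₁) = ‖(f + g) x₀‖ := by rw [h1, RCLike.ofReal_re]
    rw [ContinuousLinearMap.add_apply, re_add'] at h2
    linarith
  have hfx₁ : 1 - δ < re (f x₁) := by
    have := re_apply_le_one hg hx₁
    linarith
  have hgx₁ : 1 - δ < re (g x₁) := by
    have := re_apply_le_one hf hx₁
    linarith
  have hx₁pos : (0:ℝ) < ‖x₁‖ := by
    have h1 : re (f x₁) ≤ ‖f x₁‖ := re_le_norm _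
    have h2 : ‖f x₁‖ ≤ ‖f‖ * ‖x₁‖ := f.le_opNorm x₁
    rw [hf, one_mul] at h2
    linarith
  have hx₁ne : x₁ ≠ 0 := norm_pos_iff.1 hx₁pos
  set x : X := ((‖x₁‖ : 𝕜))⁻¹ • x₁ with hx_def
  have hxnorm : ‖x‖ = 1 := norm_normalize hx₁ne
  have hinvx₁ : 1 ≤ ‖x₁‖⁻¹ := one_le_inv_of_le hx₁pos hx₁
  have hfx₁pos : 0 ≤ re (f x₁) := by linarith
  have hgx₁pos : 0 ≤ re (g x₁) := by linarith
  have hfx : 1 - δ < re (f x) := by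
    rw [hx_def, re_normalize]
    calc 1 - δ < re (f x₁) := hfx₁
    _ = 1 * re (f x₁) := (one_mul _).symm
    _ ≤ ‖x₁‖⁻¹ * re (f x₁) := mul_le_mul_of_nonneg_right hinvx₁ hfx₁pos
  have hgx : 1 - δ < re (g x) := by
    rw [hx_def, re_normalize]
    calc 1 - δ < re (g x₁) := hgx₁
    _ = 1 * re (g x₁) := (one_mul _).symm
    _ ≤ ‖x₁‖⁻¹ * re (g x₁) := mul_le_mul_of_nonneg_right hinvx₁ hgx₁pos
  -- build w = x + s • y and normalize
  set w : X := x + (s : 𝕜) • y with hw_def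
  have hfw : re (f w) = re (f x) + s * re (f y) := re_apply_add_smul f x y s
  have hgw : re (g w) = re (g x) + s * re (g y) := re_apply_add_smul g x y s
  have hfy_lb : -1 ≤ re (f y) := neg_one_le_re_apply hf hy
  have hgy_lb : -1 ≤ re (g y) := neg_one_le_re_apply hg hy
  have hw_lb : 1 - δ + s * re (f y) ≤ ‖w‖ := by
    have h1 : re (f w) ≤ ‖f w‖ := re_le_norm _
    have h2 : ‖f w‖ ≤ ‖f‖ * ‖w‖ := f.le_opNorm w
    rw [hf, one_mul] at h2
    linarith
  have hw_pos : (0:ℝ) < ‖w‖ := by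
    have hsy : s * (-1) ≤ s * re (f y) := mul_le_mul_of_nonneg_left hfy_lb (le_of_lt hs)
    linarith only [hsy, hw_lb, hδ_small, hs_small, hε1, hε0]
  have hw_ne : w ≠ 0 := norm_pos_iff.1 hw_pos
  have hw_ub : ‖w‖ ≤ 1 + s := by
    have h1 : ‖w‖ ≤ ‖x‖ + ‖(s : 𝕜) • y‖ := norm_add_le _ _
    have h2 : ‖(s : 𝕜) • y‖ = s * ‖y‖ := by
      rw [norm_smul, RCLike.norm_ofReal, abs_of_nonneg (le_of_lt hs)]
    rw [hxnorm, h2] at h1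
    have h3 : s * ‖y‖ ≤ s * 1 := mul_le_mul_of_nonneg_left hy (le_of_lt hs)
    linarith only [h1, h3]
  set u : X := ((‖w‖ : 𝕜))⁻¹ • w with hu_def
  have hunorm : ‖u‖ = 1 := norm_normalize hw_ne
  have hgu_eq : re (g u) = ‖w‖⁻¹ * re (g w) := by rw [hu_def, re_normalize]
  have hgu_lb : 1 - δ - 2 * s < re (g u) := by
    have hsy2 : s * (-1) ≤ s * re (g y) := mul_le_mul_of_nonneg_left hgy_lb (le_of_lt hs)
    have hnum : 1 - δ - s < re (g w) := by
      linarith only [hgw, hgx, hsy2]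
    have hA : re (g u) * ‖w‖ = re (g w) := by
      rw [hgu_eq]
      field_simp
    have hApos : 0 < re (g u) := by
      rw [hgu_eq]
      have : 0 < re (g w) := by linarith only [hnum, hδ_small, hs_small, hε1]
      positivity
    exact arith_ratio (le_of_lt hδ) hs hA hApos hw_ub hnum
  have hgu_norm : 1 - η < ‖g u‖ := by
    have h1 : re (g u) ≤ ‖g u‖ := re_le_norm _
    linarith only [h1, hgu_lb, hδ2, hs2, hη]
  obtain ⟨g', hg'n, hg'u, hg'g⟩ := hBB g u hg hunorm hgu_norm
  set γ : 𝕜 := g' u with hγ_def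
  have hγnorm : ‖γ‖ = 1 := hg'u
  have hγre : 1 - δ - 2 * s - ε ^ 2 / 100 < re γ := by
    have h1 : re γ = re (g u) + re ((g' - g) u) := by
      rw [hγ_def, ContinuousLinearMap.sub_apply, re_sub']; ring
    have h2 : |re ((g' - g) u)| ≤ ‖(g' - g) u‖ := abs_re_le_norm _
    have h3 : ‖(g' - g) u‖ ≤ ‖g' - g‖ * ‖u‖ := (g' - g).le_opNorm u
    rw [hunorm, mul_one] at h3
    have := abs_le.1 h2
    linarith [this.1]
  have hγ1 : ‖γ - 1‖ ≤ ε / 4 := by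
    have hsq : ‖γ - 1‖ ^ 2 = 2 - 2 * re γ := by
      have h1 : ‖γ‖ ^ 2 = re γ * re γ + im γ * im γ := RCLike.norm_sq_eq_def
      have h2 : ‖γ - 1‖ ^ 2 = re (γ - 1) * re (γ - 1) + im (γ - 1) * im (γ - 1) :=
        RCLike.norm_sq_eq_def
      rw [re_sub', im_sub', RCLike.one_re, RCLike.one_im] at h2
      rw [hγnorm] at h1
      linarith only [h1, h2]
    have hsq2 : ‖γ - 1‖ ^ 2 ≤ (ε / 4) ^ 2 := by
      have hb := arith_sq_bound hε0 hε1 hs1 hs hδ1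
      rw [hsq]
      linarith only [hγre, hb]
    exact sq_le_imp_le (norm_nonneg _) (by positivity) hsq2
  set h : X →L[𝕜] 𝕜 := (starRingEnd 𝕜 γ) • g' with hh_def
  have hhnorm : ‖h‖ = 1 := by
    have hns : ‖h‖ = ‖starRingEnd 𝕜 γ‖ * ‖g'‖ := by rw [hh_def]; exact norm_smul (starRingEnd 𝕜 γ) g'
    rw [hns, RCLike.norm_conj, hγnorm, one_mul, hg'n]
  have hw_smul : w = ((‖w‖ : 𝕜)) • u := by
    rw [hu_def, smul_smul, mul_inv_cancel₀, one_smul]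
    exact_mod_cast ne_of_gt hw_pos
  have hhw : re (h w) = ‖w‖ := by
    have h1 : h w = ((‖w‖ : 𝕜)) * (starRingEnd 𝕜 γ * γ) := by
      conv_lhs => rw [hw_smul]
      rw [map_smul, smul_eq_mul, hh_def, ContinuousLinearMap.smul_apply, smul_eq_mul, ← hγ_def]
    rw [h1, RCLike.conj_mul, hγnorm]
    push_cast
    simp
  have hhx : re (h x) ≤ 1 := re_apply_le_one hhnorm (le_of_eq hxnorm)
  have hhw_split : re (h w) = re (h x) + s * re (h y) := re_apply_add_smul h x y s
  have hhy_lb : s * re (f y) - δ ≤ s * re (h y) := by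
    have := hw_lb
    linarith [hhw, hhw_split, hhx]
  have hhg : ‖h - g‖ ≤ ε / 4 + ε ^ 2 / 100 := by
    have h1 : h - g' = (starRingEnd 𝕜 γ - 1) • g' := by
      ext v
      rw [hh_def]
      simp [ContinuousLinearMap.sub_apply, ContinuousLinearMap.smul_apply, smul_eq_mul, sub_mul]
    have h2 : ‖h - g'‖ ≤ ε / 4 := by
      have hns : ‖(starRingEnd 𝕜 γ - 1) • g'‖ = ‖starRingEnd 𝕜 γ - 1‖ * ‖g'‖ :=
        norm_smul (starRingEnd 𝕜 γ - 1) g'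
      rw [h1, hns, hg'n, mul_one]
      have : starRingEnd 𝕜 γ - 1 = starRingEnd 𝕜 (γ - 1) := by
        rw [map_sub, map_one]
      rw [this, RCLike.norm_conj]
      exact hγ1
    calc ‖h - g‖ ≤ ‖h - g'‖ + ‖g' - g‖ := by
          have : h - g = (h - g') + (g' - g) := by abel
          rw [this]; exact norm_add_le _ _
    _ ≤ ε / 4 + ε ^ 2 / 100 := by linarith
  have hhy_ub : re (h y) ≤ re (g y) + (ε / 4 + ε ^ 2 / 100) := by
    have h1 : re (h y) - re (g y) = re ((h - g) y) := by
      rw [ContinuousLinearMap.sub_apply, re_sub']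
    have h2 : re ((h - g) y) ≤ ‖(h - g) y‖ := re_le_norm _
    have h3 : ‖(h - g) y‖ ≤ ‖h - g‖ * ‖y‖ := (h - g).le_opNorm y
    have h4 : ‖h - g‖ * ‖y‖ ≤ ‖h - g‖ * 1 := mul_le_mul_of_nonneg_left hy (norm_nonneg _)
    linarith only [h1, h2, h3, h4, hhg]
  -- combine
  have hδs : δ ≤ s * (ε / 100) := by linarith
  have hfy_ub : re (f y) ≤ re (h y) + ε / 100 := by
    have h1 : s * re (f y) ≤ s * (re (h y) + ε / 100) := by
      linarith only [hhy_lb, hδs]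
    exact le_of_mul_le_mul_left (by linarith [h1]) hs
  have hε2 : ε ^ 2 ≤ ε := by
    rw [sq]
    exact mul_le_of_le_one_left (le_of_lt hε0) hε1
  linarith only [hfgy, hfy_ub, hhy_ub, hε2, hε0]

end UC

set_option maxHeartbeats 1600000 in
theorem stmt_0 (𝕜 X : Type*) [RCLike 𝕜] [NormedAddCommGroup X] [NormedSpace 𝕜 X]
    [CompleteSpace X] :
    UniformlySmooth 𝕜 X ↔
      (∀ ε > (0:ℝ), ∃ η > (0:ℝ), ∀ (f : X →L[𝕜] 𝕜) (x : X), ‖f‖ = 1 → ‖x‖ = 1 →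
        1 - η < ‖f x‖ → ∃ g : X →L[𝕜] 𝕜, ‖g‖ = 1 ∧ ‖g x‖ = 1 ∧ ‖g - f‖ < ε) := by
  constructor
  · -- uniformly smooth ⇒ BPB point property
    intro hUS ε hε
    obtain ⟨δ, hδ, hmod⟩ := hUS (ε / 3) (by linarith)
    set t : ℝ := δ / 2 with ht_def
    have ht : 0 < t := by positivity
    have htδ : t < δ := by linarith
    refine ⟨min (ε / 3 * t) (1 / 2), lt_min (by positivity) (by norm_num), ?_⟩
    intro f x hf hx hfx
    set η : ℝ := min (ε / 3 * t) (1 / 2) with hη_def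
    have hη1 : η ≤ ε / 3 * t := min_le_left _ _
    have hη2 : η ≤ 1 / 2 := min_le_right _ _
    have hfx0 : f x ≠ 0 := by
      intro h0
      rw [h0, norm_zero] at hfx
      linarith
    obtain ⟨θ, hθ1, hθ2⟩ := exists_phase (f x) hfx0
    have hθ0 : θ ≠ 0 := by
      intro h0; rw [h0, norm_zero] at hθ1; norm_num at hθ1
    set f₁ : X →L[𝕜] 𝕜 := θ • f with hf₁_def
    have hf₁x : f₁ x = ((‖f x‖ : ℝ) : 𝕜) := by
      rw [hf₁_def, ContinuousLinearMap.smul_apply, smul_eq_mul, hθ2]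
    have hxne : x ≠ 0 := by
      intro h0; rw [h0, norm_zero] at hx; norm_num at hx
    obtain ⟨h, hhn, hhx⟩ := exists_dual_vector 𝕜 x (norm_ne_zero_iff.2 hxne)
    rw [hx] at hhx
    -- show ‖h - f₁‖ ≤ 2ε/3
    have hkey : ‖h - f₁‖ ≤ 2 * ε / 3 := by
      apply opNorm_le_of_re _ (by positivity)
      intro y hy
      have hmod' := hmod t ht htδ y x hy hx
      have h1 : 1 + t * re (h y) ≤ ‖x + (t : 𝕜) • y‖ := by
        have ha : re (h (x + (t : 𝕜) • y)) = re (h x) + t * re (h y) :=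
          re_apply_add_smul h x y t
        have hb : re (h (x + (t : 𝕜) • y)) ≤ ‖h (x + (t : 𝕜) • y)‖ := re_le_norm _
        have hc : ‖h (x + (t : 𝕜) • y)‖ ≤ ‖h‖ * ‖x + (t : 𝕜) • y‖ := h.le_opNorm _
        rw [hhn, one_mul] at hc
        rw [hhx, RCLike.ofReal_re] at ha
        linarith
      have h2 : 1 - η - t * re (f₁ y) < ‖x - (t : 𝕜) • y‖ := by
        have ha : re (f₁ (x - (t : 𝕜) • y)) = re (f₁ x) - t * re (f₁ y) :=
          re_apply_sub_smul f₁ x y t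
        have hb : re (f₁ (x - (t : 𝕜) • y)) ≤ ‖f₁ (x - (t : 𝕜) • y)‖ := re_le_norm _
        have hf₁n : ‖f₁‖ = 1 := by
          have hns : ‖f₁‖ = ‖θ‖ * ‖f‖ := by rw [hf₁_def]; exact norm_smul θ f
          rw [hns, hθ1, one_mul, hf]
        have hc : ‖f₁ (x - (t : 𝕜) • y)‖ ≤ ‖x - (t : 𝕜) • y‖ := by
          have := f₁.le_opNorm (x - (t : 𝕜) • y)
          rw [hf₁n, one_mul] at this
          exact this
        rw [hf₁x, RCLike.ofReal_re] at ha
        linarith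
      have h3 : re ((h - f₁) y) = re (h y) - re (f₁ y) := by
        rw [ContinuousLinearMap.sub_apply, re_sub']
      have h4 : t * (re (h y) - re (f₁ y)) ≤ ε / 3 * t + η := by linarith
      have h5 : t * (re (h y) - re (f₁ y)) ≤ ε / 3 * t + ε / 3 * t := by linarith
      rw [h3]
      have := le_of_mul_le_mul_left (by linarith [h5] : t * (re (h y) - re (f₁ y)) ≤ t * (2 * ε / 3)) ht
      linarith
    refine ⟨θ⁻¹ • h, ?_, ?_, ?_⟩
    · have hns : ‖θ⁻¹ • h‖ = ‖θ⁻¹‖ * ‖h‖ := norm_smul θ⁻¹ h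
      rw [hns, norm_inv, hθ1, inv_one, one_mul, hhn]
    · rw [ContinuousLinearMap.smul_apply, hhx, smul_eq_mul, norm_mul, norm_inv, hθ1, inv_one,
        one_mul]
      simp
    · have heq : θ⁻¹ • h - f = θ⁻¹ • (h - f₁) := by
        rw [smul_sub, hf₁_def, smul_smul, inv_mul_cancel₀ hθ0, one_smul]
      have hns : ‖θ⁻¹ • (h - f₁)‖ = ‖θ⁻¹‖ * ‖h - f₁‖ := norm_smul θ⁻¹ (h - f₁)
      rw [heq, hns, norm_inv, hθ1, inv_one, one_mul]
      linarith
  · -- BPB point property ⇒ uniformly smooth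
    intro hB ε hε
    have hε' : 0 < min (ε / 2) 1 := lt_min (by linarith) one_pos
    have hε'1 : min (ε / 2) 1 ≤ 1 := min_le_right _ _
    obtain ⟨δ₀, hδ₀, hUC⟩ := uc_of_bpb hB hε' hε'1
    refine ⟨min (δ₀ / 4) (1 / 2), lt_min (by positivity) (by norm_num), ?_⟩
    intro t ht htδ x z hx hz
    have htδ₀ : t < δ₀ / 4 := lt_of_lt_of_le htδ (min_le_left _ _)
    have ht1 : t < 1 / 2 := lt_of_lt_of_le htδ (min_le_right _ _)
    have hsmul : ‖(t : 𝕜) • x‖ ≤ t := by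
      rw [norm_smul, RCLike.norm_ofReal, abs_of_nonneg (le_of_lt ht)]
      have := mul_le_mul_of_nonneg_left hx (le_of_lt ht)
      linarith only [this]
    have hlow1 : 1 - t ≤ ‖z + (t : 𝕜) • x‖ := by
      have h1 : ‖z‖ ≤ ‖z + (t : 𝕜) • x‖ + ‖(t : 𝕜) • x‖ := by
        calc ‖z‖ = ‖(z + (t : 𝕜) • x) - (t : 𝕜) • x‖ := by rw [add_sub_cancel_right]
        _ ≤ ‖z + (t : 𝕜) • x‖ + ‖(t : 𝕜) • x‖ := norm_sub_le _ _
      rw [hz] at h1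
      linarith
    have hlow2 : 1 - t ≤ ‖z - (t : 𝕜) • x‖ := by
      have h1 : ‖z‖ ≤ ‖z - (t : 𝕜) • x‖ + ‖(t : 𝕜) • x‖ := by
        calc ‖z‖ = ‖(z - (t : 𝕜) • x) + (t : 𝕜) • x‖ := by rw [sub_add_cancel]
        _ ≤ ‖z - (t : 𝕜) • x‖ + ‖(t : 𝕜) • x‖ := norm_add_le _ _
      rw [hz] at h1
      linarith
    have hzp : z + (t : 𝕜) • x ≠ 0 := by
      intro h0
      rw [h0, norm_zero] at hlow1
      linarith
    have hzm : z - (t : 𝕜) • x ≠ 0 := by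
      intro h0
      rw [h0, norm_zero] at hlow2
      linarith
    obtain ⟨f, hfn, hfv⟩ := exists_dual_vector 𝕜 (z + (t : 𝕜) • x) (norm_ne_zero_iff.2 hzp)
    obtain ⟨g, hgn, hgv⟩ := exists_dual_vector 𝕜 (z - (t : 𝕜) • x) (norm_ne_zero_iff.2 hzm)
    have e1 : ‖z + (t : 𝕜) • x‖ = re (f z) + t * re (f x) := by
      have := re_apply_add_smul f z x t
      rw [hfv, RCLike.ofReal_re] at this
      linarith
    have e2 : ‖z - (t : 𝕜) • x‖ = re (g z) - t * re (g x) := by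
      have := re_apply_sub_smul g z x t
      rw [hgv, RCLike.ofReal_re] at this
      linarith
    have hsum_fg : re (f z) + re (g z) ≤ ‖f + g‖ := by
      have h1 : re ((f + g) z) = re (f z) + re (g z) := by
        rw [ContinuousLinearMap.add_apply, re_add']
      have h2 : re ((f + g) z) ≤ ‖(f + g) z‖ := re_le_norm _
      have h3 : ‖(f + g) z‖ ≤ ‖f + g‖ * ‖z‖ := (f + g).le_opNorm z
      rw [hz, mul_one] at h3
      linarith
    have hdiff_fg : re (f x) - re (g x) ≤ ‖f - g‖ := by
      have h1 : re ((f - g) x) = re (f x) - re (g x) := by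
        rw [ContinuousLinearMap.sub_apply, re_sub']
      have h2 : re ((f - g) x) ≤ ‖(f - g) x‖ := re_le_norm _
      have h3 : ‖(f - g) x‖ ≤ ‖f - g‖ * ‖x‖ := (f - g).le_opNorm x
      have h4 : ‖f - g‖ * ‖x‖ ≤ ‖f - g‖ * 1 := mul_le_mul_of_nonneg_left hx (norm_nonneg _)
      linarith only [h1, h2, h3, h4]
    rcases le_or_gt ‖f + g‖ (2 - δ₀) with hcase | hcase
    · have hd2 : ‖f - g‖ ≤ 2 := by
        have := norm_sub_le f g
        rw [hfn, hgn] at this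
        linarith
      have p1 : re (f x) - re (g x) ≤ 2 := le_trans hdiff_fg hd2
      have p2 : t * (re (f x) - re (g x)) ≤ t * 2 := mul_le_mul_of_nonneg_left p1 (le_of_lt ht)
      have p3 : 0 ≤ ε * t := le_of_lt (mul_pos hε ht)
      linarith only [e1, e2, hsum_fg, hcase, p2, p3, htδ₀, ht]
    · have hd : ‖f - g‖ ≤ min (ε / 2) 1 := hUC f g hfn hgn hcase
      have hd' : ‖f - g‖ ≤ ε / 2 := le_trans hd (min_le_left _ _)
      have hsum2 : ‖f + g‖ ≤ 2 := by
        have := norm_add_le f g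
        rw [hfn, hgn] at this
        linarith
      have p1 : t * (re (f x) - re (g x)) ≤ t * (ε / 2) :=
        mul_le_mul_of_nonneg_left (le_trans hdiff_fg hd') (le_of_lt ht)
      have p3 : 0 ≤ ε * t := le_of_lt (mul_pos hε ht)
      linarith only [e1, e2, hsum_fg, hsum2, p1, p3]
end

section
/- If X is uniformly smooth, then for every ε > 0 there exists η(ε) > 0 such that whenever x₀* ∈ B_{X*} (the closed unit ball of the dual, not just the sphere) and x₀ ∈ S_X satisfy |x₀*(x₀)| > 1 − η(ε), there exists x₁* ∈ S_{X*} with |x₁*(x₀)| = 1 and ‖x₁* − x₀*‖ < ε. -/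
open RCLike

lemma rot {𝕜 : Type*} [RCLike 𝕜] (c : 𝕜) (hc : c ≠ 0) :
    ∃ σ : 𝕜, ‖σ‖ = 1 ∧ σ * c = (‖c‖ : 𝕜) := by
  refine ⟨(‖c‖ : 𝕜) / c, ?_, div_mul_cancel₀ _ hc⟩
  rw [norm_div, RCLike.norm_ofReal, abs_norm, div_self (norm_ne_zero_iff.mpr hc)]

lemma dual_uc (𝕜 X : Type*) [RCLike 𝕜] [NormedAddCommGroup X] [NormedSpace 𝕜 X]
    (hX : UniformlySmooth 𝕜 X) :
    ∀ ε > (0:ℝ), ∃ η > (0:ℝ), ∀ f h : X →L[𝕜] 𝕜, ‖f‖ ≤ 1 → ‖h‖ ≤ 1 →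
      2 - η < ‖f + h‖ → ‖f - h‖ < ε := by
  intro ε hε
  obtain ⟨δ, hδ0, hδ⟩ := hX (ε/4) (by linarith)
  set t : ℝ := δ/2 with ht_def
  have ht : 0 < t := by positivity
  have htδ : t < δ := by simp [ht_def]; linarith
  refine ⟨min ((ε/2)*t) 1, lt_min (by positivity) one_pos, ?_⟩
  set η := min ((ε/2)*t) 1 with hη_def
  have hη1 : η ≤ 1 := min_le_right _ _
  have hηε : η ≤ (ε/2)*t := min_le_left _ _
  intro f h hf hh hsum
  by_contra hcon
  push_neg at hcon
  -- get almost-norming x for f - h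
  have hD : ‖f - h‖ - ε/4 < ‖f - h‖ := by linarith
  obtain ⟨x, hx1, hxD⟩ := (f - h).exists_lt_apply_of_lt_opNorm hD
  have hxD' : 3*ε/4 < ‖(f - h) x‖ := by linarith
  have hc0 : (f - h) x ≠ 0 := by
    intro hz; rw [hz, norm_zero] at hxD'; linarith
  obtain ⟨σ, hσ, hσc⟩ := rot _ hc0
  set x' : X := σ • x with hx'_def
  have hx'1 : ‖x'‖ < 1 := by rw [hx'_def, norm_smul, hσ, one_mul]; exact hx1
  have hDx' : (f - h) x' = (‖(f - h) x‖ : 𝕜) := by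
    rw [hx'_def, map_smul, smul_eq_mul, hσc]
  -- the operator norm bound
  have key : ‖f + h‖ ≤ 2 - η := by
    refine ContinuousLinearMap.opNorm_le_bound _ (by linarith) ?_
    intro z
    rcases eq_or_ne z 0 with rfl | hz
    · simp
    · have hz0 : (0:ℝ) < ‖z‖ := norm_pos_iff.mpr hz
      set z₁ : X := ((‖z‖ : 𝕜))⁻¹ • z with hz₁_def
      have hz₁ : ‖z₁‖ = 1 := by
        rw [hz₁_def, norm_smul, norm_inv, RCLike.norm_ofReal, abs_norm,
          inv_mul_cancel₀ (ne_of_gt hz0)]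
      have hmain : ‖(f + h) z₁‖ ≤ 2 - η := by
        rcases eq_or_ne ((f + h) z₁) 0 with h0 | h0
        · rw [h0, norm_zero]; linarith
        · obtain ⟨τ, hτ, hτc⟩ := rot _ h0
          set z' : X := τ • z₁ with hz'_def
          have hz'1 : ‖z'‖ = 1 := by rw [hz'_def, norm_smul, hτ, one_mul, hz₁]
          have hFz' : (f + h) z' = (‖(f + h) z₁‖ : 𝕜) := by
            rw [hz'_def, map_smul, smul_eq_mul, hτc]
          have hre : ‖(f + h) z₁‖ = re ((f + h) z') := by
            rw [hFz', RCLike.ofReal_re]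
          -- decompose
          have hid : (f + h) z' = f (z' + (t:𝕜) • x') + h (z' - (t:𝕜) • x')
              - (t:𝕜) * ((f - h) x') := by
            simp only [map_add, map_sub, map_smul, smul_eq_mul,
              ContinuousLinearMap.add_apply, ContinuousLinearMap.sub_apply]
            ring
          have hre2 : re ((f + h) z') = re (f (z' + (t:𝕜) • x'))
              + re (h (z' - (t:𝕜) • x')) - t * ‖(f - h) x‖ := by
            rw [hid, hDx']
            simp [RCLike.re_ofReal_mul]
          have hb1 : re (f (z' + (t:𝕜) • x')) ≤ ‖z' + (t:𝕜) • x'‖ := by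
            calc re (f (z' + (t:𝕜) • x')) ≤ ‖f (z' + (t:𝕜) • x')‖ := RCLike.re_le_norm _
              _ ≤ ‖f‖ * ‖z' + (t:𝕜) • x'‖ := (f).le_opNorm _
              _ ≤ 1 * ‖z' + (t:𝕜) • x'‖ := by
                  exact mul_le_mul_of_nonneg_right hf (norm_nonneg _)
              _ = _ := one_mul _
          have hb2 : re (h (z' - (t:𝕜) • x')) ≤ ‖z' - (t:𝕜) • x'‖ := by
            calc re (h (z' - (t:𝕜) • x')) ≤ ‖h (z' - (t:𝕜) • x')‖ := RCLike.re_le_norm _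
              _ ≤ ‖h‖ * ‖z' - (t:𝕜) • x'‖ := (h).le_opNorm _
              _ ≤ 1 * ‖z' - (t:𝕜) • x'‖ := by
                  exact mul_le_mul_of_nonneg_right hh (norm_nonneg _)
              _ = _ := one_mul _
          have hsm := hδ t ht htδ x' z' (le_of_lt hx'1) hz'1
          have hmul : t * (3*ε/4) < t * ‖(f - h) x‖ :=
            mul_lt_mul_of_pos_left hxD' ht
          have : ‖(f + h) z₁‖ ≤ 2 + (ε/4)*t - t*(3*ε/4) := by
            rw [hre, hre2]
            have := hsm
            nlinarith [hb1, hb2, hmul]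
          calc ‖(f + h) z₁‖ ≤ 2 + (ε/4)*t - t*(3*ε/4) := this
            _ = 2 - (ε/2)*t := by ring
            _ ≤ 2 - η := by linarith
      have hzeq : (f + h) z = (‖z‖ : 𝕜) * (f + h) z₁ := by
        rw [hz₁_def, map_smul, smul_eq_mul, ← mul_assoc,
          mul_inv_cancel₀ (by exact_mod_cast ne_of_gt hz0), one_mul]
      calc ‖(f + h) z‖ = ‖z‖ * ‖(f + h) z₁‖ := by
            rw [hzeq, norm_mul, RCLike.norm_ofReal, abs_norm]
        _ ≤ ‖z‖ * (2 - η) := mul_le_mul_of_nonneg_left hmain (norm_nonneg _)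
        _ = (2 - η) * ‖z‖ := mul_comm _ _
  linarith

theorem stmt_1 (𝕜 X : Type*) [RCLike 𝕜] [NormedAddCommGroup X] [NormedSpace 𝕜 X]
    [CompleteSpace X] (hX : UniformlySmooth 𝕜 X) :
    ∀ ε > (0:ℝ), ∃ η > (0:ℝ), ∀ (f : X →L[𝕜] 𝕜) (x : X), ‖f‖ ≤ 1 → ‖x‖ = 1 →
      1 - η < ‖f x‖ → ∃ g : X →L[𝕜] 𝕜, ‖g‖ = 1 ∧ ‖g x‖ = 1 ∧ ‖g - f‖ < ε := by
  intro ε hε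
  obtain ⟨η, hη0, huc⟩ := dual_uc 𝕜 X hX ε hε
  refine ⟨min η 1, lt_min hη0 one_pos, ?_⟩
  intro f x hf hx hfx
  have hη1 : min η 1 ≤ 1 := min_le_right _ _
  have hfx0 : f x ≠ 0 := by
    intro hz; rw [hz, norm_zero] at hfx; linarith
  have hx0 : x ≠ 0 := by intro hz; rw [hz, norm_zero] at hx; linarith
  obtain ⟨g₀, hg₀, hg₀x⟩ := exists_dual_vector 𝕜 x (norm_ne_zero_iff.mpr hx0)
  obtain ⟨σ, hσ, hσc⟩ := rot (f x) hfx0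
  have hσ0 : σ ≠ 0 := by intro hz; rw [hz, norm_zero] at hσ; linarith
  set h : X →L[𝕜] 𝕜 := σ • f with hh_def
  have hhn : ‖h‖ ≤ 1 := by rw [hh_def]; rw [norm_smul σ f, hσ, one_mul]; exact hf
  have hgx1 : g₀ x = 1 := by rw [hg₀x, hx]; norm_num
  have hval : (g₀ + h) x = ((1 + ‖f x‖ : ℝ) : 𝕜) := by
    simp only [ContinuousLinearMap.add_apply, hh_def, ContinuousLinearMap.smul_apply,
      smul_eq_mul, hgx1, hσc]
    push_cast
    ring
  have hsum : 2 - η < ‖g₀ + h‖ := by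
    have h1 : ‖(g₀ + h) x‖ ≤ ‖g₀ + h‖ * ‖x‖ := (g₀ + h).le_opNorm x
    rw [hx, mul_one] at h1
    have h2 : ‖(g₀ + h) x‖ = 1 + ‖f x‖ := by
      rw [hval, RCLike.norm_ofReal, abs_of_nonneg (by positivity)]
    have : 1 - min η 1 < ‖f x‖ := hfx
    have hmin : min η 1 ≤ η := min_le_left _ _
    linarith
  have hclose : ‖g₀ - h‖ < ε := huc g₀ h (le_of_eq hg₀) hhn hsum
  refine ⟨σ⁻¹ • g₀, ?_, ?_, ?_⟩
  · rw [norm_smul σ⁻¹ g₀, norm_inv, hσ, inv_one, one_mul, hg₀]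
  · rw [ContinuousLinearMap.smul_apply, hgx1, smul_eq_mul, mul_one, norm_inv, hσ, inv_one]
  · have : σ⁻¹ • g₀ - f = σ⁻¹ • (g₀ - h) := by
      rw [hh_def, smul_sub, smul_smul, inv_mul_cancel₀ hσ0, one_smul]
    rw [this, norm_smul σ⁻¹ (g₀ - h), norm_inv, hσ, inv_one, one_mul]
    exact hclose
end

section
/- Let X be a uniformly smooth Banach space and let Y be a Banach space with property β with constant ρ ∈ [0,1). Then the pair (X, Y) has the Bishop-Phelps-Bollobás point property. -/
open RCLike


def BPBpp (𝕜 X Y : Type*) [RCLike 𝕜] [NormedAddCommGroup X] [NormedSpace 𝕜 X]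
    [NormedAddCommGroup Y] [NormedSpace 𝕜 Y] : Prop :=
  ∀ ε > (0:ℝ), ∃ η > (0:ℝ), ∀ (T : X →L[𝕜] Y) (x : X), ‖T‖ = 1 → ‖x‖ = 1 →
    1 - η < ‖T x‖ → ∃ S : X →L[𝕜] Y, ‖S‖ = 1 ∧ ‖S x‖ = 1 ∧ ‖S - T‖ < ε


def PropertyBeta (𝕜 Y : Type*) [RCLike 𝕜] [NormedAddCommGroup Y] [NormedSpace 𝕜 Y] (ρ : ℝ) : Prop :=
  ∃ (I : Type) (z : I → Y) (f : I → (Y →L[𝕜] 𝕜)),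
    (∀ i, ‖z i‖ = 1) ∧ (∀ i, ‖f i‖ = 1) ∧ (∀ i, f i (z i) = 1) ∧
    (∀ i j, i ≠ j → ‖f i (z j)‖ ≤ ρ) ∧ (∀ y : Y, ‖y‖ = ⨆ i, ‖f i y‖)

lemma dualUC {𝕜 X : Type*} [RCLike 𝕜] [NormedAddCommGroup X] [NormedSpace 𝕜 X]
    (hX : UniformlySmooth 𝕜 X) (ε : ℝ) (hε : 0 < ε) :
    ∃ η > (0:ℝ), ∀ (f g : X →L[𝕜] 𝕜) (x : X), ‖f‖ ≤ 1 → ‖g‖ ≤ 1 → ‖x‖ = 1 →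
      2 - η < re (f x) + re (g x) → ‖f - g‖ ≤ ε := by
  obtain ⟨δ, hδ, hineq⟩ := hX (ε / 2) (by linarith)
  refine ⟨δ / 2 * ε / 4, by positivity, ?_⟩
  intro f g x hf hg hx hfg
  by_contra hcon
  push_neg at hcon
  -- find u with ε * ‖u‖ < ‖(f-g) u‖
  obtain ⟨u, hu⟩ : ∃ u : X, ε * ‖u‖ < ‖(f - g) u‖ := by
    by_contra h
    push_neg at h
    exact absurd ((f - g).opNorm_le_bound hε.le fun u => h u) (not_le.2 hcon)
  have hu0 : u ≠ 0 := by
    rintro rfl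
    simp at hu
  set v : X := ((‖u‖⁻¹ : ℝ) : 𝕜) • u with hv
  have hvnorm : ‖v‖ = 1 := by
    rw [hv, norm_smul, RCLike.norm_ofReal, abs_of_nonneg (by positivity)]
    exact inv_mul_cancel₀ (norm_ne_zero_iff.2 hu0)
  have hva : ε < ‖(f - g) v‖ := by
    rw [hv, map_smul, norm_smul, RCLike.norm_ofReal, abs_of_nonneg (by positivity)]
    rw [lt_inv_mul_iff₀ (norm_pos_iff.2 hu0), mul_comm]
    exact hu
  set a : 𝕜 := (f - g) v with ha
  have ha0 : a ≠ 0 := by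
    intro h; rw [h] at hva; simp at hva; linarith
  set w : X := ((‖a‖ : 𝕜) * a⁻¹) • v with hw
  have hwnorm : ‖w‖ ≤ 1 := by
    rw [hw, norm_smul, norm_mul, RCLike.norm_ofReal, abs_of_nonneg (norm_nonneg a),
      norm_inv, hvnorm, mul_one, mul_inv_cancel₀ (norm_ne_zero_iff.2 ha0)]
  have hfgw : re ((f - g) w) = ‖a‖ := by
    rw [hw, map_smul, ← ha, smul_eq_mul, mul_assoc, inv_mul_cancel₀ ha0, mul_one]
    exact RCLike.ofReal_re _
  set t : ℝ := δ / 2 with ht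
  have htpos : 0 < t := by positivity
  have key := hineq t htpos (by rw [ht]; linarith) w x hwnorm hx
  -- re f(x + t w) ≤ ‖x + t w‖ etc.
  have h1 : re (f (x + (t : 𝕜) • w)) ≤ ‖x + (t : 𝕜) • w‖ := by
    refine (re_le_norm _).trans ?_
    calc ‖f (x + (t : 𝕜) • w)‖ ≤ ‖f‖ * ‖x + (t : 𝕜) • w‖ := f.le_opNorm _
      _ ≤ 1 * ‖x + (t : 𝕜) • w‖ := by
          exact mul_le_mul_of_nonneg_right hf (norm_nonneg _)
      _ = _ := one_mul _
  have h2 : re (g (x - (t : 𝕜) • w)) ≤ ‖x - (t : 𝕜) • w‖ := by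
    refine (re_le_norm _).trans ?_
    calc ‖g (x - (t : 𝕜) • w)‖ ≤ ‖g‖ * ‖x - (t : 𝕜) • w‖ := g.le_opNorm _
      _ ≤ 1 * ‖x - (t : 𝕜) • w‖ := mul_le_mul_of_nonneg_right hg (norm_nonneg _)
      _ = _ := one_mul _
  have e1 : re (f (x + (t : 𝕜) • w)) = re (f x) + t * re (f w) := by
    rw [map_add, map_smul, smul_eq_mul, map_add, re_ofReal_mul]
  have e2 : re (g (x - (t : 𝕜) • w)) = re (g x) - t * re (g w) := by
    rw [map_sub, map_smul, smul_eq_mul, map_sub, re_ofReal_mul]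
  have e3 : re (f w) - re (g w) = ‖a‖ := by
    rw [← hfgw]; simp [map_sub]
  have hae : ε < ‖a‖ := hva
  nlinarith [htpos, hae]

theorem stmt_4 (𝕜 X Y : Type*) [RCLike 𝕜] [NormedAddCommGroup X] [NormedSpace 𝕜 X]
    [CompleteSpace X] [NormedAddCommGroup Y] [NormedSpace 𝕜 Y] [CompleteSpace Y]
    (hX : UniformlySmooth 𝕜 X) (ρ : ℝ) (hρ0 : 0 ≤ ρ) (hρ1 : ρ < 1)
    (hβ : PropertyBeta 𝕜 Y ρ) : BPBpp 𝕜 X Y := by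
  obtain ⟨I, z, f, hz, hf, hfz, hoff, hsup⟩ := hβ
  intro ε hε
  set m : ℝ := min ε 1 with hm
  have hm0 : 0 < m := lt_min hε one_pos
  have hm1 : m ≤ 1 := min_le_right _ _
  have hmε : m ≤ ε := min_le_left _ _
  set ε' : ℝ := m * (1 - ρ) / 10 with hε'def
  have hε'pos : 0 < ε' := div_pos (mul_pos hm0 (by linarith)) (by norm_num)
  set r : ℝ := m / 5 with hr
  have hr0 : 0 < r := by positivity
  have hr1 : r ≤ 1 / 5 := by rw [hr]; linarith
  have hrε' : r * (1 - ρ) = 2 * ε' := by rw [hr, hε'def]; ring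
  -- key inequality: ρ * ((1 + r) * ε' + r) ≤ r
  have hkey : ρ * ((1 + r) * ε' + r) ≤ r := by nlinarith [hε'pos.le, hr0.le]
  obtain ⟨η₀, hη₀, hUC⟩ := dualUC hX ε' hε'pos
  refine ⟨min η₀ (1 / 2), lt_min hη₀ (by norm_num), ?_⟩
  intro T x hT hx hTx
  -- pick i with ‖f i (T x)‖ > 1 - η
  have h1 : (1 : ℝ) - min η₀ (1 / 2) < ⨆ i, ‖f i (T x)‖ := by rw [← hsup]; exact hTx
  have hmin : min η₀ (1 / 2) ≤ 1 / 2 := min_le_right _ _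
  haveI hne : Nonempty I := by
    by_contra h
    rw [not_nonempty_iff] at h
    rw [iSup_of_empty', Real.sSup_empty] at h1
    linarith
  obtain ⟨i, hi⟩ := exists_lt_of_lt_ciSup h1
  set c : 𝕜 := f i (T x) with hc
  have hcpos : (0 : ℝ) < ‖c‖ := by rw [hc]; linarith
  have hc0 : c ≠ 0 := norm_pos_iff.1 hcpos
  set θ : 𝕜 := (‖c‖ : 𝕜)⁻¹ * c with hθdef
  have hθ0 : θ ≠ 0 := by
    rw [hθdef]
    exact mul_ne_zero (inv_ne_zero (by exact_mod_cast hcpos.ne')) hc0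
  have hθnorm : ‖θ‖ = 1 := by
    rw [hθdef, norm_mul, norm_inv, RCLike.norm_ofReal, abs_of_nonneg hcpos.le,
      inv_mul_cancel₀ hcpos.ne']
  set g : X →L[𝕜] 𝕜 := θ⁻¹ • ((f i).comp T) with hgdef
  have hgapp : ∀ u : X, g u = θ⁻¹ * f i (T u) := fun u => rfl
  have hgnorm : ‖g‖ ≤ 1 := by
    refine ContinuousLinearMap.opNorm_le_bound _ one_pos.le fun u => ?_
    rw [hgapp, norm_mul, norm_inv, hθnorm, inv_one, one_mul, one_mul]
    calc ‖f i (T u)‖ ≤ ‖f i‖ * ‖T u‖ := (f i).le_opNorm _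
      _ = ‖T u‖ := by rw [hf i, one_mul]
      _ ≤ ‖T‖ * ‖u‖ := T.le_opNorm u
      _ = ‖u‖ := by rw [hT, one_mul]
  have hgbound : ∀ u : X, ‖g u‖ ≤ ‖u‖ := fun u => by
    simpa using (ContinuousLinearMap.le_of_opNorm_le g hgnorm u)
  have hgx : g x = (‖c‖ : 𝕜) := by
    rw [hgapp, ← hc, hθdef, mul_inv, inv_inv, mul_assoc, inv_mul_cancel₀ hc0, mul_one]
  -- support functional at x
  have hx0 : x ≠ 0 := by intro h; rw [h, norm_zero] at hx; norm_num at hx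
  obtain ⟨x₀, hx₀n, hx₀x⟩ := exists_dual_vector 𝕜 x (norm_ne_zero_iff.2 hx0)
  have hx₀x1 : x₀ x = 1 := by rw [hx₀x, hx]; exact_mod_cast rfl
  have hclose : ‖x₀ - g‖ ≤ ε' := by
    refine hUC x₀ g x hx₀n.le hgnorm hx ?_
    rw [hx₀x1, hgx, RCLike.one_re, RCLike.ofReal_re]
    have : 1 - η₀ ≤ 1 - min η₀ (1/2) := by
      have := min_le_left η₀ (1/2); linarith
    linarith
  have hclosept : ∀ u : X, ‖x₀ u - g u‖ ≤ ε' * ‖u‖ := fun u => by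
    have := ContinuousLinearMap.le_of_opNorm_le (x₀ - g) hclose u
    simpa using this
  -- build the new operator
  set φ : X →L[𝕜] 𝕜 := ((1 + r : ℝ) : 𝕜) • (θ • x₀) - (f i).comp T with hφdef
  have hφapp : ∀ u : X, φ u = ((1 + r : ℝ) : 𝕜) * (θ * x₀ u) - f i (T u) := fun u => rfl
  have hφalt : ∀ u : X, φ u = θ * (((1 + r : ℝ) : 𝕜) * x₀ u - g u) := by
    intro u
    rw [hφapp, hgapp]
    field_simp
  have hφbound : ∀ u : X, ‖φ u‖ ≤ ((1 + r) * ε' + r) * ‖u‖ := by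
    intro u
    rw [hφalt, norm_mul, hθnorm, one_mul]
    have heq : ((1 + r : ℝ) : 𝕜) * x₀ u - g u
        = ((1 + r : ℝ) : 𝕜) * (x₀ u - g u) + ((r : ℝ) : 𝕜) * g u := by
      push_cast; ring
    rw [heq]
    calc ‖((1 + r : ℝ) : 𝕜) * (x₀ u - g u) + ((r : ℝ) : 𝕜) * g u‖
        ≤ ‖((1 + r : ℝ) : 𝕜) * (x₀ u - g u)‖ + ‖((r : ℝ) : 𝕜) * g u‖ := norm_add_le _ _
      _ = (1 + r) * ‖x₀ u - g u‖ + r * ‖g u‖ := by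
          rw [norm_mul, norm_mul, RCLike.norm_ofReal, RCLike.norm_ofReal,
            abs_of_nonneg (by linarith), abs_of_nonneg hr0.le]
      _ ≤ (1 + r) * (ε' * ‖u‖) + r * ‖u‖ := by
          have hA := mul_le_mul_of_nonneg_left (hclosept u) (show (0:ℝ) ≤ 1 + r by linarith)
          have hB := mul_le_mul_of_nonneg_left (hgbound u) hr0.le
          linarith
      _ = ((1 + r) * ε' + r) * ‖u‖ := by ring
  set S' : X →L[𝕜] Y := T + φ.smulRight (z i) with hS'def
  have hS'app : ∀ u : X, S' u = T u + φ u • z i := fun u => rfl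
  have hSi : ∀ u : X, f i (S' u) = ((1 + r : ℝ) : 𝕜) * (θ * x₀ u) := by
    intro u
    rw [hS'app, map_add, map_smul, hfz i, smul_eq_mul, mul_one, hφapp]
    ring
  have hS'le : ∀ u : X, ‖S' u‖ ≤ (1 + r) * ‖u‖ := by
    intro u
    rw [hsup (S' u)]
    refine ciSup_le fun j => ?_
    rcases eq_or_ne j i with rfl | hji
    · rw [hSi u, norm_mul, norm_mul, RCLike.norm_ofReal, abs_of_nonneg (by linarith), hθnorm,
        one_mul]
      have hxu : ‖x₀ u‖ ≤ ‖u‖ := by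
        simpa [hx₀n] using x₀.le_opNorm u
      gcongr
    · rw [hS'app, map_add, map_smul, smul_eq_mul]
      calc ‖f j (T u) + φ u * f j (z i)‖ ≤ ‖f j (T u)‖ + ‖φ u‖ * ‖f j (z i)‖ := by
            rw [← norm_mul]; exact norm_add_le _ _
        _ ≤ ‖u‖ + (((1 + r) * ε' + r) * ‖u‖) * ρ := by
            gcongr
            · calc ‖f j (T u)‖ ≤ ‖f j‖ * ‖T u‖ := (f j).le_opNorm _
                _ = ‖T u‖ := by rw [hf j, one_mul]
                _ ≤ ‖T‖ * ‖u‖ := T.le_opNorm u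
                _ = ‖u‖ := by rw [hT, one_mul]
            · exact hφbound u
            · exact hoff j i hji
        _ ≤ (1 + r) * ‖u‖ := by
            have hh := mul_le_mul_of_nonneg_right hkey (norm_nonneg u)
            linarith [hh]
  have hS'norm : ‖S'‖ ≤ 1 + r := S'.opNorm_le_bound (by linarith) hS'le
  have hS'x : ‖S' x‖ = 1 + r := by
    have hub : ‖S' x‖ ≤ 1 + r := by simpa [hx] using hS'le x
    have hlb : 1 + r ≤ ‖S' x‖ := by
      have h1' : ‖f i (S' x)‖ = 1 + r := by
        rw [hSi x, hx₀x1, mul_one, norm_mul, RCLike.norm_ofReal,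
          abs_of_nonneg (by linarith), hθnorm, mul_one]
      have h2' : ‖f i (S' x)‖ ≤ ‖S' x‖ := by
        simpa [hf i] using (f i).le_opNorm (S' x)
      linarith
    linarith
  have hr1' : (0:ℝ) < 1 + r := by linarith
  set q : ℝ := (1 + r)⁻¹ with hq
  have hq0 : 0 < q := by rw [hq]; positivity
  have hqle : q ≤ 1 := by
    rw [hq, inv_le_one_iff₀]; right; linarith
  have hqinv : q * (1 + r) = 1 := by rw [hq]; exact inv_mul_cancel₀ hr1'.ne'
  set S : X →L[𝕜] Y := ((q : ℝ) : 𝕜) • S' with hSdef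
  have hqn : ‖((q : ℝ) : 𝕜)‖ = q := by
    rw [RCLike.norm_ofReal, abs_of_nonneg hq0.le]
  have hSx : ‖S x‖ = 1 := by
    rw [hSdef]
    show ‖((q : ℝ) : 𝕜) • S' x‖ = 1
    rw [norm_smul, hqn, hS'x, hqinv]
  have hSnorm : ‖S‖ = 1 := by
    have hub : ‖S‖ ≤ 1 := by
      refine ContinuousLinearMap.opNorm_le_bound _ one_pos.le fun u => ?_
      have hSu : S u = ((q : ℝ) : 𝕜) • S' u := rfl
      rw [hSu, norm_smul, hqn, one_mul]
      calc q * ‖S' u‖ ≤ q * ((1 + r) * ‖u‖) := by gcongr; exact hS'le u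
        _ = (q * (1 + r)) * ‖u‖ := by ring
        _ = ‖u‖ := by rw [hqinv, one_mul]
    have hlb : 1 ≤ ‖S‖ := by
      have := S.le_opNorm x
      rw [hSx, hx, mul_one] at this
      exact this
    linarith
  refine ⟨S, hSnorm, hSx, ?_⟩
  have hST : ‖S - T‖ ≤ ε' + 2 * r := by
    refine ContinuousLinearMap.opNorm_le_bound _ (by positivity) fun u => ?_
    have happ : (S - T) u = ((q : ℝ) : 𝕜) • (φ u • z i) - (((1 - q : ℝ)) : 𝕜) • T u := by
      rw [ContinuousLinearMap.sub_apply, hSdef]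
      show ((q : ℝ) : 𝕜) • S' u - T u = _
      have hco : (((1 - q : ℝ)) : 𝕜) = 1 - ((q : ℝ) : 𝕜) := by push_cast; ring
      rw [hS'app, smul_add, hco, sub_smul, one_smul]
      abel
    rw [happ]
    have h1' : ‖((q : ℝ) : 𝕜) • (φ u • z i)‖ ≤ q * (((1 + r) * ε' + r) * ‖u‖) := by
      rw [norm_smul, hqn, norm_smul, hz i, mul_one]
      gcongr
      exact hφbound u
    have h2' : ‖(((1 - q : ℝ)) : 𝕜) • T u‖ ≤ (1 - q) * ‖u‖ := by
      rw [norm_smul, RCLike.norm_ofReal, abs_of_nonneg (by linarith)]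
      have h2'' : ‖T u‖ ≤ ‖u‖ := by
        calc ‖T u‖ ≤ ‖T‖ * ‖u‖ := T.le_opNorm u
          _ = ‖u‖ := by rw [hT, one_mul]
      exact mul_le_mul_of_nonneg_left h2'' (by linarith)
    have e1 : q * (((1 + r) * ε' + r) * ‖u‖) = (ε' + q * r) * ‖u‖ := by
      linear_combination ε' * ‖u‖ * hqinv
    have e2 : 1 - q = q * r := by linarith [hqinv]
    have e3 : q * r ≤ r := mul_le_of_le_one_left hr0.le hqle
    have e4 : q * r * ‖u‖ ≤ r * ‖u‖ := mul_le_mul_of_nonneg_right e3 (norm_nonneg u)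
    calc ‖((q : ℝ) : 𝕜) • (φ u • z i) - (((1 - q : ℝ)) : 𝕜) • T u‖
        ≤ ‖((q : ℝ) : 𝕜) • (φ u • z i)‖ + ‖(((1 - q : ℝ)) : 𝕜) • T u‖ := norm_sub_le _ _
      _ ≤ q * (((1 + r) * ε' + r) * ‖u‖) + (1 - q) * ‖u‖ := add_le_add h1' h2'
      _ = (ε' + q * r) * ‖u‖ + q * r * ‖u‖ := by rw [e1, e2]
      _ ≤ (ε' + 2 * r) * ‖u‖ := by linarith [e4]
  have hfin : ε' + 2 * r < ε := by
    have ha : ε' ≤ m / 10 := by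
      rw [hε'def]
      have hb : m * (1 - ρ) ≤ m * 1 := mul_le_mul_of_nonneg_left (by linarith) hm0.le
      linarith
    have hb : 2 * r = 2 * m / 5 := by rw [hr]; ring
    linarith
  linarith
end

section
/- Let H be a Hilbert space and let Y be any Banach space. Then the pair (H, Y) has the Bishop-Phelps-Bollobás point property: for every ε > 0 there exists η(ε) > 0 such that whenever T ∈ L(H,Y) with ‖T‖ = 1 and h₀ ∈ S_H satisfy ‖T(h₀)‖ > 1 − η(ε), there exists S ∈ L(H,Y) with ‖S‖ = 1, ‖S(h₀)‖ = 1, and ‖S − T‖ < ε. -/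
open RCLike ContinuousLinearMap Filter

section Aux

variable {𝕜 H Y : Type*} [RCLike 𝕜] [NormedAddCommGroup H] [InnerProductSpace 𝕜 H]
  [NormedAddCommGroup Y] [NormedSpace 𝕜 Y]

local notation "⟪" x ", " y "⟫" => @inner 𝕜 _ _ x y

lemma aux_pyth (c : 𝕜) (a e : H) (h : ⟪e, a⟫ = 0) (he : ‖e‖ = 1) :
    ‖a + c • e‖ ^ 2 = ‖a‖ ^ 2 + ‖c‖ ^ 2 := by
  have h2 : ⟪a, c • e⟫ = 0 := by
    rw [inner_smul_right, ← inner_conj_symm, h]; simp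
  rw [@norm_add_sq 𝕜, h2, norm_smul, he, mul_one]
  simp

lemma aux_contraction (x x' : H) (hx : ‖x‖ = 1) (hx' : ‖x'‖ = 1) :
    ∃ U : H →L[𝕜] H, U x = x' ∧ ‖U‖ ≤ 1 ∧
      ‖U - ContinuousLinearMap.id 𝕜 H‖ ≤ 2 * ‖x' - x‖ := by
  have hxx : ⟪x, x⟫ = 1 := by
    rw [inner_self_eq_norm_sq_to_K, hx]; simp
  have hx'x' : ⟪x', x'⟫ = 1 := by
    rw [inner_self_eq_norm_sq_to_K, hx']; simp
  set P : H →L[𝕜] H := ContinuousLinearMap.id 𝕜 H - (innerSL 𝕜 x).smulRight x with hP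
  have hPapp : ∀ h : H, P h = h - ⟪x, h⟫ • x := by intro h; simp [hP]
  set U : H →L[𝕜] H :=
    P - ((innerSL 𝕜 x').comp P).smulRight x' + (innerSL 𝕜 x).smulRight x' with hU
  have hUapp : ∀ h : H, U h = (P h - ⟪x', P h⟫ • x') + ⟪x, h⟫ • x' := by intro h; simp [hU]
  have hPx : P x = 0 := by rw [hPapp, hxx, one_smul, sub_self]
  have hUx : U x = x' := by rw [hUapp, hPx, hxx]; simp
  have hxP : ∀ h : H, ⟪x, P h⟫ = 0 := by
    intro h
    rw [hPapp, inner_sub_right, inner_smul_right, hxx, mul_one, sub_self]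
  have hPnorm : ∀ h : H, ‖P h‖ ^ 2 + ‖⟪x, h⟫‖ ^ 2 = ‖h‖ ^ 2 := by
    intro h
    have hh : P h + ⟪x, h⟫ • x = h := by rw [hPapp]; abel
    rw [← aux_pyth (⟪x, h⟫) (P h) x (hxP h) hx, hh]
  have hx'Q : ∀ h : H, ⟪x', P h - ⟪x', P h⟫ • x'⟫ = 0 := by
    intro h
    rw [inner_sub_right, inner_smul_right, hx'x', mul_one, sub_self]
  have hQnorm : ∀ h : H, ‖P h - ⟪x', P h⟫ • x'‖ ^ 2 + ‖⟪x', P h⟫‖ ^ 2 = ‖P h‖ ^ 2 := by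
    intro h
    have hh : (P h - ⟪x', P h⟫ • x') + ⟪x', P h⟫ • x' = P h := by abel
    rw [← aux_pyth (⟪x', P h⟫) (P h - ⟪x', P h⟫ • x') x' (hx'Q h) hx', hh]
  have hUnorm : ∀ h : H, ‖U h‖ ≤ ‖h‖ := by
    intro h
    have hsq : ‖U h‖ ^ 2 = ‖P h - ⟪x', P h⟫ • x'‖ ^ 2 + ‖⟪x, h⟫‖ ^ 2 := by
      rw [hUapp]
      exact aux_pyth (⟪x, h⟫) _ x' (hx'Q h) hx'
    nlinarith [hQnorm h, hPnorm h, norm_nonneg (U h), norm_nonneg h,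
      sq_nonneg ‖⟪x', P h⟫‖]
  have hPle : ∀ h : H, ‖P h‖ ≤ ‖h‖ := by
    intro h
    nlinarith [hPnorm h, norm_nonneg (P h), norm_nonneg h, sq_nonneg ‖⟪x, h⟫‖]
  refine ⟨U, hUx, ContinuousLinearMap.opNorm_le_bound U zero_le_one
    (fun h => by rw [one_mul]; exact hUnorm h), ?_⟩
  refine ContinuousLinearMap.opNorm_le_bound _ (by positivity) (fun h => ?_)
  have hUh : U h - h = ⟪x, h⟫ • (x' - x) - ⟪x' - x, P h⟫ • x' := by
    have h1 : ⟪x' - x, P h⟫ = ⟪x', P h⟫ := by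
      rw [inner_sub_left, hxP h, sub_zero]
    rw [h1, hUapp, hPapp]
    rw [smul_sub]
    abel
  have : ‖U h - h‖ ≤ ‖⟪x, h⟫‖ * ‖x' - x‖ + ‖x' - x‖ * ‖P h‖ := by
    rw [hUh]
    refine (norm_sub_le _ _).trans ?_
    rw [norm_smul, norm_smul, hx', mul_one]
    gcongr
    exact norm_inner_le_norm _ _
  have h2 : ‖⟪x, h⟫‖ ≤ ‖h‖ := by
    simpa [hx] using norm_inner_le_norm (𝕜 := 𝕜) x h
  calc ‖(U - ContinuousLinearMap.id 𝕜 H) h‖ = ‖U h - h‖ := by simp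
    _ ≤ ‖⟪x, h⟫‖ * ‖x' - x‖ + ‖x' - x‖ * ‖P h‖ := this
    _ ≤ ‖h‖ * ‖x' - x‖ + ‖x' - x‖ * ‖h‖ := by
        gcongr; exact hPle h
    _ = 2 * ‖x' - x‖ * ‖h‖ := by ring

lemma aux_step (A : H →L[𝕜] Y) (v : H) (hv : ‖v‖ = 1) (hAv : 0 < ‖A v‖)
    (γ δ : ℝ) (hγ : 0 < γ) (hδ : 0 < δ) (hδγ : δ ≤ γ) :
    ∃ (A' : H →L[𝕜] Y) (v' : H), ‖v'‖ = 1 ∧ ‖A' - A‖ ≤ γ ∧ ‖A'‖ - ‖A' v'‖ ≤ δ ∧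
      ‖A v‖ + γ - δ ≤ ‖A' v'‖ ∧ ‖v' - v‖ ^ 2 ≤ 2 * ((‖A‖ - ‖A v‖) + δ) / γ := by
  have hvv : ⟪v, v⟫ = 1 := by rw [inner_self_eq_norm_sq_to_K, hv]; simp
  set c : 𝕜 := ((γ / ‖A v‖ : ℝ) : 𝕜) with hc
  set y : Y := c • A v with hy
  have hyn : ‖y‖ = γ := by
    rw [hy, norm_smul, hc, RCLike.norm_ofReal, abs_of_pos (by positivity),
      div_mul_cancel₀ _ hAv.ne']
  set R : H →L[𝕜] Y := (innerSL 𝕜 v).smulRight y with hR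
  have hRapp : ∀ h : H, R h = ⟪v, h⟫ • y := fun h => rfl
  have hRn : ‖R‖ ≤ γ := by
    refine ContinuousLinearMap.opNorm_le_bound _ hγ.le (fun h => ?_)
    rw [hRapp, norm_smul, hyn]
    calc ‖⟪v, h⟫‖ * γ ≤ (‖v‖ * ‖h‖) * γ := by
          gcongr; exact norm_inner_le_norm _ _
      _ = γ * ‖h‖ := by rw [hv]; ring
  set A' : H →L[𝕜] Y := A + R with hA'
  have hA'A : ‖A' - A‖ ≤ γ := by rw [hA']; simpa using hRn
  have hA'v : A' v = ((1 + γ / ‖A v‖ : ℝ) : 𝕜) • A v := by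
    rw [hA']
    simp only [ContinuousLinearMap.add_apply, hRapp, hvv, one_smul, hy]
    nth_rewrite 1 [← one_smul 𝕜 (A v)]
    rw [← add_smul]
    congr 1
    rw [hc]
    push_cast
    ring
  have hA'vn : ‖A' v‖ = ‖A v‖ + γ := by
    rw [hA'v, norm_smul, RCLike.norm_ofReal, abs_of_pos (by positivity)]
    field_simp
  have hA'ge : ‖A v‖ + γ ≤ ‖A'‖ := by
    rw [← hA'vn]
    calc ‖A' v‖ ≤ ‖A'‖ * ‖v‖ := A'.le_opNorm v
      _ = ‖A'‖ := by rw [hv, mul_one]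
  clear_value c y R A'
  have hrpos : 0 < ‖A'‖ - δ + δ := by linarith
  have hrlt : ‖A'‖ - δ < ‖A'‖ := by linarith
  obtain ⟨x₀, hx₀lt, hx₀⟩ := A'.exists_lt_apply_of_lt_opNorm hrlt
  have hrnn : (0:ℝ) ≤ ‖A'‖ - δ := by linarith
  have hx₀ne : x₀ ≠ 0 := by
    intro h
    rw [h] at hx₀
    simp at hx₀
    linarith
  have hx₀pos : 0 < ‖x₀‖ := norm_pos_iff.mpr hx₀ne
  set v₁ : H := ((‖x₀‖⁻¹ : ℝ) : 𝕜) • x₀ with hv₁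
  have hv₁n : ‖v₁‖ = 1 := by
    rw [hv₁, norm_smul, RCLike.norm_ofReal, abs_of_pos (by positivity),
      inv_mul_cancel₀ hx₀pos.ne']
  have hA'v₁ : ‖A'‖ - δ < ‖A' v₁‖ := by
    have : A' v₁ = ((‖x₀‖⁻¹ : ℝ) : 𝕜) • A' x₀ := by rw [hv₁, map_smul]
    rw [this, norm_smul, RCLike.norm_ofReal, abs_of_pos (by positivity)]
    have h1 : (1:ℝ) ≤ ‖x₀‖⁻¹ := by
      rw [le_inv_comm₀] <;> simp [hx₀pos, hx₀lt.le]
    nlinarith [norm_nonneg (A' x₀)]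
  clear_value v₁
  -- phase adjustment
  have hphase : ∃ v' : H, ‖v'‖ = 1 ∧ ‖A' v'‖ = ‖A' v₁‖ ∧
      ⟪v, v'⟫ = ((‖⟪v, v₁⟫‖ : ℝ) : 𝕜) := by
    by_cases ha : ⟪v, v₁⟫ = 0
    · exact ⟨v₁, hv₁n, rfl, by rw [ha]; simp⟩
    · refine ⟨(((‖⟪v, v₁⟫‖ : ℝ) : 𝕜) / ⟪v, v₁⟫) • v₁, ?_, ?_, ?_⟩
      · rw [norm_smul, norm_div, RCLike.norm_ofReal, abs_of_pos (norm_pos_iff.mpr ha),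
          div_self (norm_ne_zero_iff.mpr ha), one_mul, hv₁n]
      · rw [map_smul, norm_smul, norm_div, RCLike.norm_ofReal,
          abs_of_pos (norm_pos_iff.mpr ha), div_self (norm_ne_zero_iff.mpr ha), one_mul]
      · rw [inner_smul_right, div_mul_cancel₀ _ ha]
  obtain ⟨v', hv'n, hv'A, hv'i⟩ := hphase
  set t : ℝ := ‖⟪v, v₁⟫‖ with ht
  have htnn : 0 ≤ t := norm_nonneg _
  clear_value t
  have ht1 : t ≤ 1 := by
    calc t = ‖⟪v, v₁⟫‖ := ht
      _ ≤ ‖v‖ * ‖v₁‖ := norm_inner_le_norm _ _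
      _ = 1 := by rw [hv, hv₁n, mul_one]
  have hkey : ‖A' v'‖ ≤ ‖A‖ + t * γ := by
    have h1 : A' v' = A v' + R v' := by rw [hA']; rfl
    have h2 : ‖R v'‖ = t * γ := by
      rw [hRapp, norm_smul, hv'i, hyn, RCLike.norm_ofReal, abs_of_nonneg htnn]
    calc ‖A' v'‖ ≤ ‖A v'‖ + ‖R v'‖ := by rw [h1]; exact norm_add_le _ _
      _ ≤ ‖A‖ + t * γ := by
          rw [h2]
          gcongr
          calc ‖A v'‖ ≤ ‖A‖ * ‖v'‖ := A.le_opNorm v'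
            _ = ‖A‖ := by rw [hv'n, mul_one]
  have hlow : ‖A v‖ + γ - δ ≤ ‖A' v'‖ := by
    rw [hv'A]
    linarith [hA'ge, hA'v₁]
  have hgap : γ - t * γ ≤ (‖A‖ - ‖A v‖) + δ := by linarith [hkey, hlow]
  have hdist : ‖v' - v‖ ^ 2 = 2 - 2 * t := by
    have hre : re ⟪v', v⟫ = t := by
      rw [← inner_conj_symm, hv'i]
      simp
    rw [@norm_sub_sq 𝕜, hre, hv'n, hv]
    ring
  refine ⟨A', v', hv'n, hA'A, by rw [hv'A]; linarith, hlow, ?_⟩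
  have final : 2 - 2 * t ≤ 2 * ((‖A‖ - ‖A v‖) + δ) / γ := by
    rw [le_div_iff₀ hγ]
    linarith [hgap]
  rw [hdist]
  exact final

def BPBInv (d : ℝ) (k : ℕ) (σ : (H →L[𝕜] Y) × H) : Prop :=
  ‖σ.2‖ = 1 ∧ ‖σ.1‖ - ‖σ.1 σ.2‖ ≤ d * (1/4 : ℝ)^k ∧ 1 - d ≤ ‖σ.1 σ.2‖

lemma aux_attain [CompleteSpace H] [CompleteSpace Y]
    (T : H →L[𝕜] Y) (x : H) (hT : ‖T‖ = 1) (hx : ‖x‖ = 1)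
    (g d : ℝ) (hg : 0 < g) (hd : 0 < d) (hdg : d ≤ g) (hd2 : d ≤ 1/2)
    (hTx : 1 - d < ‖T x‖) :
    ∃ (S₀ : H →L[𝕜] Y) (x' : H), ‖x'‖ = 1 ∧ ‖S₀‖ = ‖S₀ x'‖ ∧ 1 - d ≤ ‖S₀ x'‖ ∧
      ‖S₀ - T‖ ≤ g ∧ ‖x' - x‖ ≤ 4 * Real.sqrt (8 * d / g) := by
  have hex : ∀ (k : ℕ) (σ : (H →L[𝕜] Y) × H), BPBInv d k σ →
      ∃ σ' : (H →L[𝕜] Y) × H, BPBInv d (k+1) σ' ∧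
        ‖σ'.1 - σ.1‖ ≤ g/2 * (1/2 : ℝ)^k ∧ ‖σ'.2 - σ.2‖^2 ≤ (8*d/g) * (1/2 : ℝ)^k := by
    rintro k ⟨A, v⟩ ⟨hv, hgap, hlb⟩
    have hAv : 0 < ‖A v‖ := by linarith
    have hγ : (0:ℝ) < g/2 * (1/2 : ℝ)^k := by positivity
    have hδ : (0:ℝ) < d * (1/4 : ℝ)^(k+1) := by positivity
    have hδγ : d * (1/4 : ℝ)^(k+1) ≤ g/2 * (1/2 : ℝ)^k := by
      have h1 : (1/4 : ℝ)^(k+1) ≤ (1/4) * (1/2 : ℝ)^k := by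
        rw [pow_succ, mul_comm]
        exact mul_le_mul_of_nonneg_left
          (pow_le_pow_left₀ (by norm_num) (by norm_num) k) (by norm_num)
      calc d * (1/4 : ℝ)^(k+1) ≤ d * ((1/4) * (1/2 : ℝ)^k) :=
            mul_le_mul_of_nonneg_left h1 hd.le
        _ = d/4 * (1/2 : ℝ)^k := by ring
        _ ≤ g/2 * (1/2 : ℝ)^k := by
            exact mul_le_mul_of_nonneg_right (by linarith) (by positivity)
    obtain ⟨A', v', h1, h2, h3, h4, h5⟩ := aux_step A v hv hAv _ _ hγ hδ hδγ
    refine ⟨(A', v'), ⟨h1, h3, by dsimp only; linarith⟩, h2, ?_⟩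
    dsimp only at h5 ⊢
    refine h5.trans ?_
    rw [div_le_iff₀ hγ]
    have hpk : ((1/4 : ℝ))^k = (1/2 : ℝ)^k * (1/2 : ℝ)^k := by
      rw [← mul_pow]; norm_num
    have e1 : (8*d/g) * (1/2 : ℝ)^k * (g/2 * (1/2 : ℝ)^k) = 4 * d * (1/4 : ℝ)^k := by
      rw [hpk]
      field_simp
      ring
    rw [e1]
    have e2 : d * (1/4 : ℝ)^(k+1) ≤ d * (1/4 : ℝ)^k :=
      mul_le_mul_of_nonneg_left
        (pow_le_pow_of_le_one (by norm_num) (by norm_num) (Nat.le_succ k)) hd.le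
    nlinarith [hgap, e2, pow_nonneg (by norm_num : (0:ℝ) ≤ 1/4) k]
  choose! next hex1 hex2 hex3 using hex
  have hInv : ∀ k : ℕ, BPBInv d k (Nat.rec (motive := fun _ => (H →L[𝕜] Y) × H)
      (T, x) (fun n σ => next n σ) k) := by
    intro k
    induction k with
    | zero =>
      refine ⟨hx, ?_, ?_⟩
      · show ‖T‖ - ‖T x‖ ≤ d * (1/4 : ℝ)^0
        rw [hT, pow_zero, mul_one]
        linarith
      · show 1 - d ≤ ‖T x‖
        linarith
    | succ n ih => exact hex1 n _ ih
  set f : ℕ → (H →L[𝕜] Y) × H :=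
    fun k => Nat.rec (motive := fun _ => (H →L[𝕜] Y) × H) (T, x) (fun n σ => next n σ) k with hf
  have hInv' : ∀ k, BPBInv d k (f k) := hInv
  have hstepA : ∀ k, ‖(f (k+1)).1 - (f k).1‖ ≤ g/2 * (1/2 : ℝ)^k :=
    fun k => hex2 k (f k) (hInv' k)
  have hstepv : ∀ k, ‖(f (k+1)).2 - (f k).2‖^2 ≤ (8*d/g) * (1/2 : ℝ)^k :=
    fun k => hex3 k (f k) (hInv' k)
  -- Cauchy for operators
  have hcA : CauchySeq (fun k => (f k).1) := by
    apply cauchySeq_of_le_geometric (1/2 : ℝ) (g/2) (by norm_num)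
    intro n
    rw [dist_eq_norm, norm_sub_rev]
    exact hstepA n
  obtain ⟨S₀, hS₀⟩ := cauchySeq_tendsto_of_complete hcA
  -- Cauchy for points
  have hstepv' : ∀ k, ‖(f (k+1)).2 - (f k).2‖ ≤ Real.sqrt (8*d/g) * (Real.sqrt (1/2 : ℝ))^k := by
    intro k
    have hsq : Real.sqrt ((1/2 : ℝ)^k) = Real.sqrt (1/2) ^ k := by
      rw [← Real.sqrt_sq (pow_nonneg (Real.sqrt_nonneg _) k)]
      congr 1
      rw [← pow_mul, mul_comm, pow_mul, Real.sq_sqrt (by norm_num : (0:ℝ) ≤ 1/2)]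
    have h1 : ‖(f (k+1)).2 - (f k).2‖ = Real.sqrt (‖(f (k+1)).2 - (f k).2‖^2) := by
      rw [Real.sqrt_sq (norm_nonneg _)]
    rw [h1, ← hsq, ← Real.sqrt_mul (by positivity : (0:ℝ) ≤ 8*d/g)]
    exact Real.sqrt_le_sqrt (hstepv k)
  have hr2 : Real.sqrt (1/2 : ℝ) < 1 := by
    rw [show (1:ℝ) = Real.sqrt 1 by rw [Real.sqrt_one]]
    exact Real.sqrt_lt_sqrt (by norm_num) (by norm_num)
  have hcv : CauchySeq (fun k => (f k).2) := by
    apply cauchySeq_of_le_geometric (Real.sqrt (1/2 : ℝ)) (Real.sqrt (8*d/g)) hr2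
    intro n
    rw [dist_eq_norm, norm_sub_rev]
    exact hstepv' n
  obtain ⟨x', hx'⟩ := cauchySeq_tendsto_of_complete hcv
  -- distance bounds to limits
  have hS₀T : ‖S₀ - T‖ ≤ g := by
    have := dist_le_of_le_geometric_of_tendsto₀ (1/2 : ℝ) (g/2) (by norm_num)
      (fun n => by rw [dist_eq_norm, norm_sub_rev]; exact hstepA n) hS₀
    rw [dist_eq_norm, norm_sub_rev] at this
    have hf0 : (f 0).1 = T := rfl
    rw [hf0] at this
    calc ‖S₀ - T‖ ≤ (g/2) / (1 - 1/2) := this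
      _ = g := by ring_nf
  have hx'x : ‖x' - x‖ ≤ 4 * Real.sqrt (8*d/g) := by
    have := dist_le_of_le_geometric_of_tendsto₀ (Real.sqrt (1/2 : ℝ)) (Real.sqrt (8*d/g)) hr2
      (fun n => by rw [dist_eq_norm, norm_sub_rev]; exact hstepv' n) hx'
    rw [dist_eq_norm, norm_sub_rev] at this
    have hf0 : (f 0).2 = x := rfl
    rw [hf0] at this
    refine this.trans ?_
    have h34 : Real.sqrt (1/2 : ℝ) ≤ 3/4 := by
      nlinarith [Real.sq_sqrt (by norm_num : (0:ℝ) ≤ 1/2), Real.sqrt_nonneg (1/2 : ℝ)]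
    have hden : (1/4 : ℝ) ≤ 1 - Real.sqrt (1/2) := by linarith
    calc Real.sqrt (8*d/g) / (1 - Real.sqrt (1/2)) ≤ Real.sqrt (8*d/g) / (1/4) := by
          apply div_le_div_of_nonneg_left (Real.sqrt_nonneg _) (by norm_num) hden
      _ = 4 * Real.sqrt (8*d/g) := by ring
  -- limit facts
  have hvnorm : ∀ k, ‖(f k).2‖ = 1 := fun k => (hInv' k).1
  have hx'norm : ‖x'‖ = 1 := by
    have h1 : Filter.Tendsto (fun k => ‖(f k).2‖) atTop (nhds ‖x'‖) := hx'.norm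
    have h2 : (fun k => ‖(f k).2‖) = fun _ => (1:ℝ) := funext hvnorm
    rw [h2] at h1
    exact tendsto_nhds_unique h1 tendsto_const_nhds
  have heval : Filter.Tendsto (fun k => (f k).1 (f k).2) atTop (nhds (S₀ x')) := by
    have hb := (isBoundedBilinearMap_apply (𝕜 := 𝕜) (E := H) (F := Y)).continuous
    have := (hb.tendsto (S₀, x')).comp (hS₀.prodMk_nhds hx')
    exact this
  have hevaln : Filter.Tendsto (fun k => ‖(f k).1 (f k).2‖) atTop (nhds ‖S₀ x'‖) := heval.norm
  have hS₀n : Filter.Tendsto (fun k => ‖(f k).1‖) atTop (nhds ‖S₀‖) := hS₀.norm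
  have hlow : 1 - d ≤ ‖S₀ x'‖ := by
    apply le_of_tendsto_of_tendsto' tendsto_const_nhds hevaln
    exact fun k => (hInv' k).2.2
  have hpow0 : Filter.Tendsto (fun k : ℕ => d * (1/4 : ℝ)^k) atTop (nhds 0) := by
    rw [show (0:ℝ) = d * 0 by ring]
    exact (tendsto_pow_atTop_nhds_zero_of_lt_one (by norm_num) (by norm_num)).const_mul d
  have hle : ‖S₀‖ ≤ ‖S₀ x'‖ := by
    have h1 : Filter.Tendsto (fun k => ‖(f k).1 (f k).2‖ + d * (1/4 : ℝ)^k) atTop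
        (nhds (‖S₀ x'‖ + 0)) := hevaln.add hpow0
    rw [add_zero] at h1
    apply le_of_tendsto_of_tendsto' hS₀n h1
    exact fun k => by linarith [(hInv' k).2.1]
  have hge : ‖S₀ x'‖ ≤ ‖S₀‖ := by
    calc ‖S₀ x'‖ ≤ ‖S₀‖ * ‖x'‖ := S₀.le_opNorm x'
      _ = ‖S₀‖ := by rw [hx'norm, mul_one]
  exact ⟨S₀, x', hx'norm, le_antisymm hle hge, hlow, hS₀T, hx'x⟩

end Aux

set_option maxHeartbeats 1000000 in
theorem stmt_5 (𝕜 H Y : Type*) [RCLike 𝕜] [NormedAddCommGroup H] [InnerProductSpace 𝕜 H]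
    [CompleteSpace H] [NormedAddCommGroup Y] [NormedSpace 𝕜 Y] [CompleteSpace Y] :
    BPBpp 𝕜 H Y := by
  intro ε hε
  set ε' : ℝ := min ε 1 with hε'
  have hε'pos : 0 < ε' := lt_min hε one_pos
  have hε'le1 : ε' ≤ 1 := min_le_right _ _
  have hε'leε : ε' ≤ ε := min_le_left _ _
  set d : ℝ := ε'^3 / 2^20 with hd
  have hdpos : 0 < d := by positivity
  refine ⟨d, hdpos, ?_⟩
  intro T x hT hx hTx
  set g : ℝ := ε' / 8 with hg
  have hgpos : 0 < g := by positivity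
  have h3 : ε'^3 ≤ ε' := by nlinarith [hε'pos.le, hε'le1, sq_nonneg ε']
  have hdg : d ≤ g := by
    rw [hd, hg]
    rw [div_le_div_iff₀ (by norm_num) (by norm_num)]
    nlinarith [hε'pos.le]
  have hd2 : d ≤ 1/2 := by
    rw [hd]
    rw [div_le_div_iff₀ (by norm_num) (by norm_num)]
    nlinarith [hε'pos.le]
  obtain ⟨S₀, x', hx'n, hS₀attain, hS₀low, hS₀T, hx'x⟩ :=
    aux_attain T x hT hx g d hgpos hdpos hdg hd2 hTx
  -- simplify the sqrt bound
  have hsqrt : 4 * Real.sqrt (8 * d / g) = ε' / 32 := by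
    have h8 : 8 * d / g = (ε' / 128)^2 := by
      rw [hd, hg]
      field_simp
      ring
    rw [h8, Real.sqrt_sq (by positivity)]
    ring
  rw [hsqrt] at hx'x
  obtain ⟨U, hUx, hUn, hUid⟩ := aux_contraction (𝕜 := 𝕜) x x' hx hx'n
  set S₁ : H →L[𝕜] Y := S₀.comp U with hS₁
  set m : ℝ := ‖S₀ x'‖ with hm
  have hmpos : 0 < m := by
    rw [hm]
    have : d ≤ 1/2 := hd2
    linarith
  have hS₁x : S₁ x = S₀ x' := by rw [hS₁, ContinuousLinearMap.comp_apply, hUx]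
  have hS₁le : ‖S₁‖ ≤ m := by
    calc ‖S₁‖ ≤ ‖S₀‖ * ‖U‖ := ContinuousLinearMap.opNorm_comp_le _ _
      _ ≤ ‖S₀‖ * 1 := by gcongr
      _ = m := by rw [mul_one, hS₀attain]
  have hS₁ge : m ≤ ‖S₁‖ := by
    calc m = ‖S₁ x‖ := by rw [hS₁x]
      _ ≤ ‖S₁‖ * ‖x‖ := S₁.le_opNorm x
      _ = ‖S₁‖ := by rw [hx, mul_one]
  have hS₁n : ‖S₁‖ = m := le_antisymm hS₁le hS₁ge
  set S : H →L[𝕜] Y := ((m⁻¹ : ℝ) : 𝕜) • S₁ with hS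
  have hSn : ‖S‖ = 1 := by
    have hnorm1 : ‖(((m⁻¹ : ℝ)) : 𝕜) • S₁‖ = ‖(((m⁻¹ : ℝ)) : 𝕜)‖ * ‖S₁‖ := norm_smul (((m⁻¹ : ℝ)) : 𝕜) S₁
    rw [hS, hnorm1, RCLike.norm_ofReal, abs_of_pos (by positivity), hS₁n]
    field_simp
  have hSx : ‖S x‖ = 1 := by
    have h0 : S x = (((m⁻¹ : ℝ)) : 𝕜) • (S₁ x) := by rw [hS]; rfl
    have hnorm1 : ‖(((m⁻¹ : ℝ)) : 𝕜) • (S₁ x)‖ = ‖(((m⁻¹ : ℝ)) : 𝕜)‖ * ‖S₁ x‖ := norm_smul (((m⁻¹ : ℝ)) : 𝕜) (S₁ x)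
    rw [h0, hnorm1, RCLike.norm_ofReal, abs_of_pos (by positivity), hS₁x]
    rw [← hm]
    field_simp
  refine ⟨S, hSn, hSx, ?_⟩
  -- bound ‖S - T‖
  have hmub : m ≤ 1 + g := by
    rw [← hS₀attain]
    calc ‖S₀‖ ≤ ‖S₀ - T‖ + ‖T‖ := by
          have := norm_add_le (S₀ - T) T
          simpa [sub_add_cancel] using this
      _ ≤ 1 + g := by rw [hT]; linarith
  have hmlb : 1 - d ≤ m := hS₀low
  have hSS₁ : ‖S - S₁‖ ≤ g := by
    have h1 : S - S₁ = (((m⁻¹ - 1 : ℝ)) : 𝕜) • S₁ := by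
      have hc : (((m⁻¹ - 1 : ℝ)) : 𝕜) = ((m⁻¹ : ℝ) : 𝕜) - 1 := by push_cast; ring
      rw [hc, sub_smul, one_smul, hS]
    have hnorm1 : ‖(((m⁻¹ - 1 : ℝ)) : 𝕜) • S₁‖ = ‖(((m⁻¹ - 1 : ℝ)) : 𝕜)‖ * ‖S₁‖ := norm_smul (((m⁻¹ - 1 : ℝ)) : 𝕜) S₁
    rw [h1, hnorm1, RCLike.norm_ofReal, hS₁n]
    have h2 : |m⁻¹ - 1| * m = |1 - m| := by
      have hfs : (m⁻¹ - 1) * m = 1 - m := by field_simp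
      calc |m⁻¹ - 1| * m = |m⁻¹ - 1| * |m| := by rw [abs_of_pos hmpos]
        _ = |(m⁻¹ - 1) * m| := (abs_mul _ _).symm
        _ = |1 - m| := by rw [hfs]
    rw [h2, abs_le]
    constructor <;> [linarith; linarith]
  have hS₁S₀ : ‖S₁ - S₀‖ ≤ 2 * (1 + g) * (ε'/32) := by
    have h1 : S₁ - S₀ = S₀.comp (U - ContinuousLinearMap.id 𝕜 H) := by
      rw [ContinuousLinearMap.comp_sub, ContinuousLinearMap.comp_id, hS₁]
    rw [h1]
    calc ‖S₀.comp (U - ContinuousLinearMap.id 𝕜 H)‖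
        ≤ ‖S₀‖ * ‖U - ContinuousLinearMap.id 𝕜 H‖ := ContinuousLinearMap.opNorm_comp_le _ _
      _ ≤ (1 + g) * (2 * (ε'/32)) := by
          apply mul_le_mul _ (hUid.trans (by linarith)) (norm_nonneg _) (by positivity)
          rw [hS₀attain]
          linarith
      _ = 2 * (1 + g) * (ε'/32) := by ring
  have hg1 : g ≤ 1/8 := by rw [hg]; linarith
  calc ‖S - T‖ ≤ ‖S - S₁‖ + ‖S₁ - S₀‖ + ‖S₀ - T‖ := by
        have h1 := norm_add_le (S - S₁) (S₁ - S₀)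
        have h2 := norm_add_le (S - S₁ + (S₁ - S₀)) (S₀ - T)
        simpa [sub_add_sub_cancel] using h2.trans (by linarith)
    _ ≤ g + 2 * (1 + g) * (ε'/32) + g := by linarith
    _ < ε' := by
        rw [hg]
        nlinarith [hε'pos, hε'le1]
    _ ≤ ε := hε'leε
end

section
/- Let H be a Hilbert space and let h₀, h₁ ∈ S_H with ‖h₀ − h₁‖ < ε. Then there exists a linear isometry R: H → H with ‖R‖ = 1 such that R(h₀) = h₁ and ‖R − Id_H‖ < ε (allowing non-strict inequality ≤ Cε for a universal constant C if necessary). -/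
open RCLike

open scoped InnerProductSpace

set_option maxHeartbeats 1000000

theorem stmt_6 (𝕜 H : Type*) [RCLike 𝕜] [NormedAddCommGroup H] [InnerProductSpace 𝕜 H]
    [CompleteSpace H] (ε : ℝ) (hε : 0 < ε) (h₀ h₁ : H) (hh₀ : ‖h₀‖ = 1) (hh₁ : ‖h₁‖ = 1)
    (hdist : ‖h₀ - h₁‖ < ε) :
    ∃ R : H →L[𝕜] H, (∀ h : H, ‖R h‖ = ‖h‖) ∧ R h₀ = h₁ ∧
      ‖R - ContinuousLinearMap.id 𝕜 H‖ < ε := by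
  classical
  set a : 𝕜 := ⟪h₀, h₁⟫_𝕜 with ha
  set v : H := h₁ - a • h₀ with hv
  set b : ℝ := ‖v‖ with hb
  set e : H := ((b : 𝕜)⁻¹) • v with he
  set d : ℝ := ‖h₀ - h₁‖ with hd
  have hd0 : 0 ≤ d := norm_nonneg _
  have hb0 : 0 ≤ b := norm_nonneg _
  have hH0 : ⟪h₀, h₀⟫_𝕜 = 1 := by
    rw [inner_self_eq_norm_sq_to_K, hh₀]; norm_num
  have hH1 : ⟪h₁, h₁⟫_𝕜 = 1 := by
    rw [inner_self_eq_norm_sq_to_K, hh₁]; norm_num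
  have h0v : ⟪h₀, v⟫_𝕜 = 0 := by
    rw [hv, inner_sub_right, inner_smul_right, hH0, mul_one, ← ha, sub_self]
  have h0e : ⟪h₀, e⟫_𝕜 = 0 := by rw [he, inner_smul_right, h0v, mul_zero]
  have he0 : ⟪e, h₀⟫_𝕜 = 0 := by rw [← inner_conj_symm, h0e, map_zero]
  have hbe : (b : 𝕜) • e = v := by
    by_cases hv0 : v = 0
    · simp [he, hv0]
    · rw [he, smul_smul, mul_inv_cancel₀, one_smul]
      simpa [hb] using hv0
  have h1eq : h₁ = a • h₀ + (b : 𝕜) • e := by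
    rw [hbe, hv]; abel
  have hecase : ‖e‖ = 1 ∨ (e = 0 ∧ b = 0) := by
    by_cases hv0 : v = 0
    · right; simp [he, hv0, hb]
    · left
      have hbpos : 0 < b := by simpa [hb] using norm_pos_iff.2 hv0
      rw [he, norm_smul, norm_inv, norm_ofReal, abs_of_pos hbpos, ← hb,
        inv_mul_cancel₀ hbpos.ne']
  have hab : ‖a‖ ^ 2 + b ^ 2 = 1 := by
    have hO : ⟪a • h₀, v⟫_𝕜 = 0 := by rw [inner_smul_left, h0v, mul_zero]
    have h1v : h₁ = a • h₀ + v := by rw [hv]; abel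
    have := norm_add_sq_eq_norm_sq_add_norm_sq_of_inner_eq_zero (a • h₀) v hO
    rw [← h1v, hh₁, norm_smul, hh₀, ← hb] at this
    nlinarith [this]
  have hd2 : d ^ 2 = 2 - 2 * re a := by
    have := @norm_sub_sq 𝕜 _ _ _ _ h₀ h₁
    rw [hh₀, hh₁, ← ha, ← hd] at this
    linarith [this]
  clear_value a v b e d
  clear hv he hb h0v
  set u : H := (-(b : 𝕜)) • h₀ + ((starRingEnd 𝕜) a - 1) • e with hu
  set f : H := (-(b : 𝕜)) • h₀ + ((starRingEnd 𝕜) a) • e with hf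
  have hfu : f = e + u := by rw [hf, hu]; module
  have hca : ‖(starRingEnd 𝕜) a - 1‖ ^ 2 = ‖a‖ ^ 2 - 2 * re a + 1 := by
    have h1 : ‖(starRingEnd 𝕜) a - 1‖ = ‖a - 1‖ := by
      rw [show (starRingEnd 𝕜) a - 1 = (starRingEnd 𝕜) (a - 1) by rw [map_sub, map_one]]
      exact RCLike.norm_conj _
    have h2 := @norm_sub_sq 𝕜 𝕜 _ _ _ a 1
    simp only [RCLike.inner_apply, mul_one, one_mul, RCLike.conj_re, norm_one, one_pow] at h2
    rw [h1, h2]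
  have hef : ‖f‖ = ‖e‖ := by
    rcases hecase with hE | ⟨hE, hB⟩
    · have horth : ⟪(-(b : 𝕜)) • h₀, ((starRingEnd 𝕜) a) • e⟫_𝕜 = 0 := by
        rw [inner_smul_left, inner_smul_right, h0e]; ring
      have hpy := norm_add_sq_eq_norm_sq_add_norm_sq_of_inner_eq_zero _ _ horth
      rw [← hf, norm_smul, norm_smul, hh₀, hE, norm_neg, norm_ofReal,
        abs_of_nonneg hb0, RCLike.norm_conj] at hpy
      have h2 : ‖f‖ ^ 2 = ‖e‖ ^ 2 := by rw [hE]; nlinarith [hpy, hab]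
      exact (sq_eq_sq₀ (norm_nonneg _) (norm_nonneg _)).mp h2
    · simp [hf, hE, hB]
  have hnu : ‖u‖ = d * ‖e‖ := by
    rcases hecase with hE | ⟨hE, hB⟩
    · have horth : ⟪(-(b : 𝕜)) • h₀, ((starRingEnd 𝕜) a - 1) • e⟫_𝕜 = 0 := by
        rw [inner_smul_left, inner_smul_right, h0e]; ring
      have hpy := norm_add_sq_eq_norm_sq_add_norm_sq_of_inner_eq_zero _ _ horth
      rw [← hu, norm_smul, norm_smul, hh₀, hE, norm_neg, norm_ofReal,
        abs_of_nonneg hb0] at hpy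
      have h2 : ‖u‖ ^ 2 = (d * ‖e‖) ^ 2 := by
        rw [hE]; nlinarith [hpy, hca, hd2]
      exact (sq_eq_sq₀ (norm_nonneg _) (mul_nonneg hd0 (norm_nonneg _))).mp h2
    · simp [hu, hE, hB]
  have hEe : ⟪e, e⟫_𝕜 = ((‖e‖ : ℝ) : 𝕜) ^ 2 := inner_self_eq_norm_sq_to_K e
  have h1f : ⟪h₁, f⟫_𝕜 = 0 := by
    rw [hf, h1eq]
    simp only [inner_add_left, inner_add_right, inner_smul_left, inner_smul_right,
      hH0, h0e, he0, hEe, RCLike.conj_ofReal, map_neg, mul_one, mul_zero, zero_add,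
      add_zero, zero_mul]
    rcases hecase with hE | ⟨hE, hB⟩
    · rw [hE]; push_cast; ring
    · rw [hB]; push_cast; ring
  have h10u : ⟪h₁ - h₀, u⟫_𝕜 = 0 := by
    rw [hu, h1eq]
    simp only [inner_sub_left, inner_add_left, inner_add_right, inner_smul_left,
      inner_smul_right, hH0, h0e, he0, hEe, RCLike.conj_ofReal, map_neg, mul_one,
      mul_zero, zero_add, add_zero, zero_mul]
    rcases hecase with hE | ⟨hE, hB⟩
    · rw [hE]; push_cast; ring
    · rw [hB]; push_cast; ring
  set R : H →L[𝕜] H := ContinuousLinearMap.id 𝕜 H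
      + (innerSL 𝕜 h₀).smulRight (h₁ - h₀) + (innerSL 𝕜 e).smulRight u with hR
  have hRx : ∀ x : H, R x = x + ⟪h₀, x⟫_𝕜 • (h₁ - h₀) + ⟪e, x⟫_𝕜 • u := by
    intro x
    simp [hR, ContinuousLinearMap.add_apply, ContinuousLinearMap.smulRight_apply]
  have key : ∀ x : H, ‖R x‖ = ‖x‖ ∧ ‖R x - x‖ ≤ d * ‖x‖ := by
    intro x
    set α : 𝕜 := ⟪h₀, x⟫_𝕜 with hα
    set β : 𝕜 := ⟪e, x⟫_𝕜 with hβ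
    set w : H := x - α • h₀ - β • e with hw
    have hw0 : ⟪h₀, w⟫_𝕜 = 0 := by
      rw [hw, inner_sub_right, inner_sub_right, inner_smul_right, inner_smul_right,
        hH0, h0e, ← hα]
      ring
    have hwe : ⟪e, w⟫_𝕜 = 0 := by
      rcases hecase with hE | ⟨hE, hB⟩
      · rw [hw, inner_sub_right, inner_sub_right, inner_smul_right, inner_smul_right,
          he0, hEe, hE, ← hβ]
        push_cast; ring
      · rw [hE, inner_zero_left]
    have hxdec : x = α • h₀ + β • e + w := by rw [hw]; module
    have hxsq : ‖x‖ * ‖x‖ = ‖α‖ ^ 2 + ‖β‖ ^ 2 * ‖e‖ ^ 2 + ‖w‖ * ‖w‖ := by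
      have o1 : ⟪α • h₀, β • e + w⟫_𝕜 = 0 := by
        simp only [inner_add_right, inner_smul_left, inner_smul_right, h0e, hw0]
        ring
      have o2 : ⟪β • e, w⟫_𝕜 = 0 := by rw [inner_smul_left, hwe, mul_zero]
      have p1 := norm_add_sq_eq_norm_sq_add_norm_sq_of_inner_eq_zero _ _ o1
      have p2 := norm_add_sq_eq_norm_sq_add_norm_sq_of_inner_eq_zero _ _ o2
      rw [← add_assoc, ← hxdec] at p1
      rw [p1, p2, norm_smul, norm_smul, hh₀]
      ring
    have hRdec : R x = α • h₁ + β • f + w := by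
      rw [hRx x, ← hα, ← hβ, hfu]
      nth_rewrite 1 [hxdec]
      module
    have hRsq : ‖R x‖ * ‖R x‖ = ‖α‖ ^ 2 + ‖β‖ ^ 2 * ‖e‖ ^ 2 + ‖w‖ * ‖w‖ := by
      have h1w : ⟪h₁, w⟫_𝕜 = 0 := by
        rw [h1eq]
        simp only [inner_add_left, inner_smul_left, hw0, hwe]
        ring
      have hfw : ⟪f, w⟫_𝕜 = 0 := by
        rw [hf]
        simp only [inner_add_left, inner_smul_left, hw0, hwe]
        ring
      have o1 : ⟪α • h₁, β • f + w⟫_𝕜 = 0 := by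
        simp only [inner_add_right, inner_smul_left, inner_smul_right, h1f, h1w]
        ring
      have o2 : ⟪β • f, w⟫_𝕜 = 0 := by rw [inner_smul_left, hfw, mul_zero]
      have p1 := norm_add_sq_eq_norm_sq_add_norm_sq_of_inner_eq_zero _ _ o1
      have p2 := norm_add_sq_eq_norm_sq_add_norm_sq_of_inner_eq_zero _ _ o2
      rw [← add_assoc, ← hRdec] at p1
      rw [p1, p2, norm_smul, norm_smul, hh₁, hef]
      ring
    have hiso : ‖R x‖ = ‖x‖ := by
      have h2 : ‖R x‖ ^ 2 = ‖x‖ ^ 2 := by rw [sq, sq, hRsq, hxsq]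
      exact (sq_eq_sq₀ (norm_nonneg _) (norm_nonneg _)).mp h2
    refine ⟨hiso, ?_⟩
    have hdiff : R x - x = α • (h₁ - h₀) + β • u := by
      rw [hRx x, ← hα, ← hβ]; module
    have o1 : ⟪α • (h₁ - h₀), β • u⟫_𝕜 = 0 := by
      rw [inner_smul_left, inner_smul_right, h10u]; ring
    have p1 := norm_add_sq_eq_norm_sq_add_norm_sq_of_inner_eq_zero _ _ o1
    have hdd : ‖h₁ - h₀‖ = d := by rw [hd, norm_sub_rev]
    rw [← hdiff, norm_smul, norm_smul, hnu, hdd] at p1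
    have hsq : ‖R x - x‖ ^ 2 ≤ (d * ‖x‖) ^ 2 := by
      rw [sq, p1]
      have hwnn : 0 ≤ ‖w‖ * ‖w‖ := mul_nonneg (norm_nonneg _) (norm_nonneg _)
      nlinarith [hxsq, hwnn, hd0, sq_nonneg (‖α‖), sq_nonneg (‖β‖ * ‖e‖),
        mul_nonneg (mul_nonneg hd0 hd0) hwnn]
    exact (pow_le_pow_iff_left₀ (norm_nonneg _)
      (mul_nonneg hd0 (norm_nonneg _)) two_ne_zero).mp hsq
  refine ⟨R, fun h => (key h).1, ?_, ?_⟩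
  · rw [hRx h₀, hH0, he0, one_smul, zero_smul, add_zero]
    abel
  · have hle : ‖R - ContinuousLinearMap.id 𝕜 H‖ ≤ d :=
      ContinuousLinearMap.opNorm_le_bound _ hd0 fun x => by
        simpa [ContinuousLinearMap.sub_apply] using (key x).2
    exact lt_of_le_of_lt hle hdist
end

section
/- Let X be a uniformly smooth Banach space and {Y_j : j ∈ J} an arbitrary family of Banach spaces. If the pair (X, (⊕_{j∈J} Y_j)_{ℓ₁}) has the Bishop-Phelps-Bollobás point property, then for each j ∈ J the pair (X, Y_j) has the Bishop-Phelps-Bollobás point property. -/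
open RCLike


section Aux
variable {𝕜 : Type*} {J : Type*} {Y : J → Type*} [RCLike 𝕜]
  [∀ j, NormedAddCommGroup (Y j)] [∀ j, NormedSpace 𝕜 (Y j)]

lemma lp_one_summable (f : lp Y 1) : Summable fun k => ‖f k‖ := by
  have h := (lp.memℓp f).summable (p := 1) (by simp)
  simpa using h

lemma lp_one_norm (f : lp Y 1) : ‖f‖ = ∑' k, ‖f k‖ := by
  rw [lp.norm_eq_tsum_rpow (by simp) f]
  simp

noncomputable def singleLI [DecidableEq J] (j : J) : Y j →ₗᵢ[𝕜] lp Y 1 where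
  toFun a := lp.single 1 j a
  map_add' a b := by
    apply lp.ext
    funext k
    by_cases hk : k = j
    · subst hk; simp [lp.coeFn_add, lp.single_apply_self]
    · simp [lp.coeFn_add, lp.single_apply_ne 1 j _ hk]
  map_smul' c a := by simp [lp.single_smul 1 j c a]
  norm_map' a := by
    have h := lp.norm_single (p := 1) (E := Y) (by simp) j a
    simpa using h

lemma lp_one_split [DecidableEq J] (j : J) (f : lp Y 1) :
    ‖f‖ = ‖f j‖ + ∑' k, (if k = j then 0 else ‖f k‖) := by
  rw [lp_one_norm]
  exact Summable.tsum_eq_add_tsum_ite (lp_one_summable f) j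

end Aux

theorem stmt_8 (𝕜 X : Type*) {J : Type*} (Y : J → Type*) [RCLike 𝕜]
    [NormedAddCommGroup X] [NormedSpace 𝕜 X] [CompleteSpace X]
    [∀ j, NormedAddCommGroup (Y j)] [∀ j, NormedSpace 𝕜 (Y j)] [∀ j, CompleteSpace (Y j)]
    (hX : UniformlySmooth 𝕜 X) (h : BPBpp 𝕜 X (lp Y 1)) :
    ∀ j : J, BPBpp 𝕜 X (Y j) := by
  classical
  intro j ε hε
  set ε' : ℝ := min ε (1/2) with hε'def
  have hε'pos : 0 < ε' := lt_min hε (by norm_num)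
  obtain ⟨η, hη, hmain⟩ := h ε' hε'pos
  refine ⟨η, hη, ?_⟩
  intro T x hT hx hTx
  set ι : Y j →ₗᵢ[𝕜] lp Y 1 := singleLI j with hιdef
  set Tt : X →L[𝕜] lp Y 1 := ι.toContinuousLinearMap.comp T with hTtdef
  have hTtnorm : ‖Tt‖ = 1 := by
    rw [hTtdef, LinearIsometry.norm_toContinuousLinearMap_comp]; exact hT
  have hTtx : ‖Tt x‖ = ‖T x‖ := ι.norm_map (T x)
  obtain ⟨St, hStnorm, hStx, hStT⟩ := hmain Tt x hTtnorm hx (by rw [hTtx]; exact hTx)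
  have hTtv : ∀ v : X, Tt v = lp.single 1 j (T v) := fun v => rfl
  have hsum : ∀ v : X, Summable fun k => ‖St v k‖ := fun v => lp_one_summable _
  -- off-diagonal coords of St equal those of St - Tt
  have hcoord : ∀ (v : X) (k : J), k ≠ j → St v k = (St - Tt) v k := by
    intro v k hk
    simp [ContinuousLinearMap.sub_apply, lp.coeFn_sub, Pi.sub_apply, hTtv,
      lp.single_apply_ne 1 j _ hk, Pi.single_eq_of_ne hk]
  -- dual functionals
  have hφ : ∀ k, ∃ g : Y k →L[𝕜] 𝕜, ‖g‖ ≤ 1 ∧ g (St x k) = (‖St x k‖ : 𝕜) :=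
    fun k => exists_dual_vector'' 𝕜 (St x k)
  choose φ hφ1 hφ2 using hφ
  set G : X → 𝕜 := fun v => ∑' k, if k = j then 0 else φ k (St v k) with hGdef
  have htermle : ∀ (v : X) (k : J),
      ‖if k = j then (0:𝕜) else φ k (St v k)‖ ≤ ‖St v k‖ := by
    intro v k
    by_cases hk : k = j
    · simp [hk]
    · simp only [if_neg hk]
      calc ‖φ k (St v k)‖ ≤ 1 * ‖St v k‖ := (φ k).le_of_opNorm_le (hφ1 k) _
        _ = ‖St v k‖ := one_mul _
  have hGsummable : ∀ v : X, Summable fun k => (if k = j then (0:𝕜) else φ k (St v k)) :=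
    fun v => Summable.of_norm_bounded (hsum v) (htermle v)
  have hBsummable : ∀ v : X, Summable fun k => (if k = j then (0:ℝ) else ‖St v k‖) := by
    intro v
    refine Summable.of_nonneg_of_le (fun k => ?_) (fun k => ?_) (hsum v)
    · by_cases hk : k = j <;> simp [hk]
    · by_cases hk : k = j <;> simp [hk]
  have hGle : ∀ v : X, ‖G v‖ ≤ ∑' k, (if k = j then (0:ℝ) else ‖St v k‖) := by
    intro v
    have h1 : Summable fun k => ‖if k = j then (0:𝕜) else φ k (St v k)‖ :=
      Summable.of_nonneg_of_le (fun k => norm_nonneg _) (htermle v) (hsum v)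
    calc ‖G v‖ ≤ ∑' k, ‖if k = j then (0:𝕜) else φ k (St v k)‖ :=
          norm_tsum_le_tsum_norm h1
      _ ≤ ∑' k, (if k = j then (0:ℝ) else ‖St v k‖) := by
          refine Summable.tsum_le_tsum (fun k => ?_) h1 (hBsummable v)
          have hb := htermle v k
          by_cases hk : k = j
          · simp [hk]
          · simpa [hk] using hb
  -- inequality A
  have hA : ∀ v : X, ‖St v j‖ + ‖G v‖ ≤ ‖v‖ := by
    intro v
    have h2 := lp_one_split j (St v)
    have h3 : ‖St v‖ ≤ ‖v‖ := by
      calc ‖St v‖ ≤ ‖St‖ * ‖v‖ := St.le_opNorm v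
        _ = ‖v‖ := by rw [hStnorm, one_mul]
    have := hGle v
    linarith
  -- α and c
  set α : ℝ := ‖St x j‖ with hαdef
  set c : ℝ := ∑' k, (if k = j then (0:ℝ) else ‖St x k‖) with hcdef
  have hαc : α + c = 1 := by
    have := lp_one_split j (St x)
    rw [hStx] at this
    linarith
  have hc0 : 0 ≤ c := tsum_nonneg (fun k => by by_cases hk : k = j <;> simp [hk])
  have hcB : ∀ v : X, (∑' k, (if k = j then (0:ℝ) else ‖St v k‖)) ≤ ‖(St - Tt) v‖ := by
    intro v
    have hs := lp_one_summable ((St - Tt) v)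
    calc (∑' k, (if k = j then (0:ℝ) else ‖St v k‖))
        ≤ ∑' k, ‖(St - Tt) v k‖ := by
          refine Summable.tsum_le_tsum (fun k => ?_) (hBsummable v) hs
          by_cases hk : k = j
          · simp [hk]
          · rw [if_neg hk, hcoord v k hk]
      _ = ‖(St - Tt) v‖ := (lp_one_norm _).symm
  have hcle : c ≤ ‖St - Tt‖ := by
    calc c ≤ ‖(St - Tt) x‖ := hcB x
      _ ≤ ‖St - Tt‖ * ‖x‖ := (St - Tt).le_opNorm x
      _ = ‖St - Tt‖ := by rw [hx, mul_one]
  have hα : 0 < α := by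
    have : ε' ≤ 1/2 := min_le_right _ _
    linarith [hStT]
  -- the vector z
  set z : Y j := ((α : 𝕜))⁻¹ • St x j with hzdef
  have hznorm : ‖z‖ = 1 := by
    rw [hzdef, norm_smul, norm_inv, RCLike.norm_ofReal, abs_of_pos hα, ← hαdef,
      inv_mul_cancel₀ hα.ne']
  -- G is additive and homogeneous
  have hGadd : ∀ v w : X, G (v + w) = G v + G w := by
    intro v w
    rw [hGdef]
    simp only
    rw [← Summable.tsum_add (hGsummable v) (hGsummable w)]
    refine tsum_congr fun k => ?_
    have hS : St (v + w) = St v + St w := map_add St v w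
    by_cases hk : k = j
    · simp [hk]
    · simp [hk, hS, lp.coeFn_add, Pi.add_apply, map_add]
  have hGsmul : ∀ (a : 𝕜) (v : X), G (a • v) = a * G v := by
    intro a v
    rw [hGdef]
    simp only
    rw [← tsum_mul_left]
    refine tsum_congr fun k => ?_
    have hS : St (a • v) = a • St v := map_smul St a v
    by_cases hk : k = j
    · simp [hk]
    · simp [hk, hS, lp.coeFn_smul, Pi.smul_apply, map_smul, smul_eq_mul]
  -- the operator U
  set Umap : X →ₗ[𝕜] Y j :=
    { toFun := fun v => St v j + G v • z
      map_add' := by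
        intro v w
        have hS : St (v + w) = St v + St w := map_add St v w
        show (St (v + w) : ∀ k, Y k) j + G (v + w) • z
            = ((St v : ∀ k, Y k) j + G v • z) + ((St w : ∀ k, Y k) j + G w • z)
        rw [hGadd, hS]
        simp only [lp.coeFn_add, Pi.add_apply, add_smul]
        abel
      map_smul' := by
        intro a v
        have hS : St (a • v) = a • St v := map_smul St a v
        show (St (a • v) : ∀ k, Y k) j + G (a • v) • z
            = (RingHom.id 𝕜) a • ((St v : ∀ k, Y k) j + G v • z)
        rw [hGsmul, hS]
        simp only [lp.coeFn_smul, Pi.smul_apply, RingHom.id_apply, smul_add, mul_smul]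
    } with hUmapdef
  have hUbound : ∀ v : X, ‖Umap v‖ ≤ 1 * ‖v‖ := by
    intro v
    rw [one_mul, hUmapdef]
    simp only [LinearMap.coe_mk, AddHom.coe_mk]
    calc ‖St v j + G v • z‖ ≤ ‖St v j‖ + ‖G v • z‖ := norm_add_le _ _
      _ = ‖St v j‖ + ‖G v‖ := by rw [norm_smul, hznorm, mul_one]
      _ ≤ ‖v‖ := hA v
  set U : X →L[𝕜] Y j := Umap.mkContinuous 1 hUbound with hUdef
  have hUapp : ∀ v : X, U v = St v j + G v • z := fun v => rfl
  have hU1 : ‖U‖ ≤ 1 := Umap.mkContinuous_norm_le zero_le_one hUbound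
  -- value at x
  have hGx : G x = (c : 𝕜) := by
    rw [hGdef, hcdef]
    simp only
    have hmt := ContinuousLinearMap.map_tsum (RCLike.ofRealCLM (K := 𝕜)) (hBsummable x)
    rw [RCLike.ofRealCLM_apply] at hmt
    rw [hmt]
    refine tsum_congr fun k => ?_
    by_cases hk : k = j
    · simp [hk]
    · simp [hk, hφ2 k]
  have hUx : ‖U x‖ = 1 := by
    rw [hUapp, hGx, hzdef]
    have : St x j + (c : 𝕜) • ((α : 𝕜))⁻¹ • St x j
        = ((1 : 𝕜) + (c : 𝕜) * ((α : 𝕜))⁻¹) • St x j := by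
      rw [add_smul, one_smul, mul_smul]
    rw [this, norm_smul]
    have hcast : ((1 : 𝕜) + (c : 𝕜) * ((α : 𝕜))⁻¹) = ((1 + c * α⁻¹ : ℝ) : 𝕜) := by
      push_cast
      ring
    rw [hcast, RCLike.norm_ofReal, abs_of_nonneg (by positivity), ← hαdef]
    field_simp
    linarith
  have hUnorm : ‖U‖ = 1 := by
    refine le_antisymm hU1 ?_
    calc (1:ℝ) = ‖U x‖ := hUx.symm
      _ ≤ ‖U‖ * ‖x‖ := U.le_opNorm x
      _ = ‖U‖ := by rw [hx, mul_one]
  have hUT : ‖U - T‖ < ε := by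
    have hle : ‖U - T‖ ≤ ‖St - Tt‖ := by
      refine ContinuousLinearMap.opNorm_le_bound _ (norm_nonneg _) fun v => ?_
      have hTv : T v = Tt v j := by
        rw [hTtv]; exact (lp.single_apply_self 1 j (T v)).symm
      have e1 : (U - T) v = (St - Tt) v j + G v • z := by
        rw [ContinuousLinearMap.sub_apply, hUapp, hTv]
        simp only [ContinuousLinearMap.sub_apply, lp.coeFn_sub, Pi.sub_apply]
        abel
      rw [e1]
      have hsplit := lp_one_split j ((St - Tt) v)
      calc ‖(St - Tt) v j + G v • z‖ ≤ ‖(St - Tt) v j‖ + ‖G v • z‖ := norm_add_le _ _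
        _ = ‖(St - Tt) v j‖ + ‖G v‖ := by rw [norm_smul, hznorm, mul_one]
        _ ≤ ‖(St - Tt) v j‖ + ∑' k, (if k = j then (0:ℝ) else ‖St v k‖) :=
            add_le_add_right (hGle v) _
        _ ≤ ‖(St - Tt) v j‖ + ∑' k, (if k = j then (0:ℝ) else ‖(St - Tt) v k‖) := by
            refine add_le_add_right (le_of_eq (tsum_congr fun k => ?_)) _
            by_cases hk : k = j
            · simp [hk]
            · rw [if_neg hk, if_neg hk, hcoord v k hk]
        _ = ‖(St - Tt) v‖ := hsplit.symm
        _ ≤ ‖St - Tt‖ * ‖v‖ := (St - Tt).le_opNorm v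
    calc ‖U - T‖ ≤ ‖St - Tt‖ := hle
      _ < ε' := hStT
      _ ≤ ε := min_le_left _ _
  exact ⟨U, hUnorm, hUx, hUT⟩
end

section
/- Let X be a uniformly smooth Banach space and let H be a Hilbert space. The pair (X × H, 𝕂) has the Bishop-Phelps-Bollobás point property for bilinear forms if and only if the pair (X, H*) has the Bishop-Phelps-Bollobás point property for operators. -/
open RCLike


def BPBppBilin (𝕜 X Y Z : Type*) [RCLike 𝕜] [NormedAddCommGroup X] [NormedSpace 𝕜 X]
    [NormedAddCommGroup Y] [NormedSpace 𝕜 Y] [NormedAddCommGroup Z] [NormedSpace 𝕜 Z] : Prop :=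
  ∀ ε > (0:ℝ), ∃ η > (0:ℝ), ∀ (B : X →L[𝕜] Y →L[𝕜] Z) (x : X) (y : Y),
    ‖B‖ = 1 → ‖x‖ = 1 → ‖y‖ = 1 → 1 - η < ‖B x y‖ →
    ∃ A : X →L[𝕜] Y →L[𝕜] Z, ‖A‖ = 1 ∧ ‖A x y‖ = 1 ∧ ‖A - B‖ < ε

open scoped InnerProductSpace

section Aux
variable {𝕜 H : Type*} [RCLike 𝕜] [NormedAddCommGroup H] [InnerProductSpace 𝕜 H]

noncomputable def refl' (𝕜 : Type*) {H : Type*} [RCLike 𝕜] [NormedAddCommGroup H]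
    [InnerProductSpace 𝕜 H] (v : H) : H →L[𝕜] H :=
  ContinuousLinearMap.id 𝕜 H - (2:𝕜) • ((innerSL 𝕜 v).smulRight v)

lemma refl'_apply (v h : H) : refl' 𝕜 v h = h - (2 * ⟪v, h⟫_𝕜) • v := by
  rw [refl']
  rw [ContinuousLinearMap.sub_apply, ContinuousLinearMap.smul_apply,
    ContinuousLinearMap.smulRight_apply, ContinuousLinearMap.id_apply, innerSL_apply_apply,
    smul_smul]

lemma lem_re (c : 𝕜) : re (2 * c * (starRingEnd 𝕜) c) = 2 * ‖c‖^2 := by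
  rw [mul_assoc, RCLike.mul_conj]
  rw [show ((2:𝕜) = ((2:ℝ):𝕜)) by push_cast; ring,
    ← RCLike.ofReal_pow, ← RCLike.ofReal_mul, RCLike.ofReal_re]

lemma refl'_norm (v : H) (hv : ‖v‖ = 1) (h : H) : ‖refl' 𝕜 v h‖ = ‖h‖ := by
  have h1 : ‖refl' 𝕜 v h‖^2 = ‖h‖^2 := by
    rw [refl'_apply, @norm_sub_sq 𝕜]
    rw [inner_smul_right, ← inner_conj_symm h v, lem_re, norm_smul, norm_mul]
    rw [RCLike.norm_ofNat, hv]
    ring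
  rw [← Real.sqrt_sq (norm_nonneg (refl' 𝕜 v h)), h1, Real.sqrt_sq (norm_nonneg h)]

lemma refl'_invol (v : H) (hv : ‖v‖ = 1) (h : H) : refl' 𝕜 v (refl' 𝕜 v h) = h := by
  rw [refl'_apply, refl'_apply]
  rw [inner_sub_right, inner_smul_right, inner_self_eq_norm_sq_to_K, hv]
  push_cast
  module

lemma refl'_sub_bound (a b h : H) (ha : ‖a‖ = 1) (hb : ‖b‖ = 1) :
    ‖refl' 𝕜 a h - refl' 𝕜 b h‖ ≤ 4 * ‖a - b‖ * ‖h‖ := by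
  rw [refl'_apply, refl'_apply]
  have key : h - (2 * ⟪a, h⟫_𝕜) • a - (h - (2 * ⟪b, h⟫_𝕜) • b)
      = (2 * ⟪b - a, h⟫_𝕜) • b + (2 * ⟪a, h⟫_𝕜) • (b - a) := by
    rw [inner_sub_left]
    module
  rw [key]
  have h1 : ‖(2 * ⟪b - a, h⟫_𝕜) • b‖ ≤ 2 * ‖a - b‖ * ‖h‖ := by
    rw [norm_smul, norm_mul, RCLike.norm_ofNat, hb, mul_one]
    have := norm_inner_le_norm (𝕜 := 𝕜) (b - a) h
    rw [norm_sub_rev b a] at this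
    nlinarith [norm_nonneg (a - b), norm_nonneg h]
  have h2 : ‖(2 * ⟪a, h⟫_𝕜) • (b - a)‖ ≤ 2 * ‖a - b‖ * ‖h‖ := by
    rw [norm_smul, norm_mul, RCLike.norm_ofNat, norm_sub_rev b a]
    have := norm_inner_le_norm (𝕜 := 𝕜) a h
    rw [ha, one_mul] at this
    nlinarith [norm_nonneg (a - b), norm_nonneg h, norm_nonneg (⟪a, h⟫_𝕜)]
  calc ‖(2 * ⟪b - a, h⟫_𝕜) • b + (2 * ⟪a, h⟫_𝕜) • (b - a)‖
      ≤ ‖(2 * ⟪b - a, h⟫_𝕜) • b‖ + ‖(2 * ⟪a, h⟫_𝕜) • (b - a)‖ := norm_add_le _ _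
    _ ≤ 4 * ‖a - b‖ * ‖h‖ := by linarith

lemma rotation_exists (y w : H) (hy : ‖y‖ = 1) (hw : ‖w‖ = 1) (r : ℝ) (hr : 0 ≤ r)
    (hwy : ⟪w, y⟫_𝕜 = ((r:ℝ):𝕜)) :
    ∃ U : H →L[𝕜] H, U y = w ∧ (∀ h, ‖U h‖ = ‖h‖) ∧ ∀ h, ‖U h - h‖ ≤ 4 * ‖w - y‖ * ‖h‖ := by
  have hyw : ⟪y, w⟫_𝕜 = ((r:ℝ):𝕜) := by
    rw [← inner_conj_symm y w, hwy, RCLike.conj_ofReal]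
  have hs2 : ‖y + w‖^2 = 2 + 2*r := by
    rw [@norm_add_sq 𝕜, hyw, RCLike.ofReal_re, hy, hw]
    ring
  have hspos : 0 < ‖y + w‖ := by
    nlinarith [norm_nonneg (y + w), sq_nonneg (‖y + w‖)]
  set s : ℝ := ‖y + w‖ with hsdef
  have hsne : s ≠ 0 := hspos.ne'
  set a : H := ((s⁻¹ : ℝ) : 𝕜) • (y + w) with hadef
  have ha : ‖a‖ = 1 := by
    rw [hadef, norm_smul, RCLike.norm_ofReal, abs_of_pos (inv_pos.mpr hspos), ← hsdef]
    field_simp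
  refine ⟨(refl' 𝕜 a).comp (refl' 𝕜 y), ?_, ?_, ?_⟩
  · -- U y = w
    have hyy : refl' 𝕜 y y = -y := by
      rw [refl'_apply, inner_self_eq_norm_sq_to_K, hy]
      push_cast
      module
    have hay : ⟪a, y⟫_𝕜 = ((s⁻¹*(1+r) : ℝ):𝕜) := by
      rw [hadef, inner_smul_left, RCLike.conj_ofReal, inner_add_left,
        inner_self_eq_norm_sq_to_K, hy, hwy]
      push_cast
      ring
    have hray : refl' 𝕜 a y = -w := by
      rw [refl'_apply, hay, hadef, smul_smul]
      have hco : 2 * ((s⁻¹*(1+r) : ℝ):𝕜) * ((s⁻¹ : ℝ):𝕜) = ((2*(s⁻¹*(1+r))*s⁻¹ : ℝ):𝕜) := by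
        push_cast; ring
      have hval : (2*(s⁻¹*(1+r))*s⁻¹ : ℝ) = 1 := by
        have : s^2 = 2 + 2*r := hs2
        field_simp
        nlinarith
      rw [hco, hval]
      push_cast
      module
    rw [ContinuousLinearMap.comp_apply, hyy, map_neg, hray, neg_neg]
  · intro h
    rw [ContinuousLinearMap.comp_apply, refl'_norm a ha, refl'_norm y hy]
  · intro h
    have hya : ‖y - a‖ ≤ ‖w - y‖ := by
      have e1 : y - ((2⁻¹:ℝ):𝕜) • (y + w) = ((2⁻¹:ℝ):𝕜) • (y - w) := by
        push_cast
        module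
      have e2 : y - a = ((2⁻¹:ℝ):𝕜) • (y - w) + (((2⁻¹:ℝ):𝕜) - ((s⁻¹:ℝ):𝕜)) • (y + w) := by
        rw [hadef]
        push_cast
        module
      have n1 : ‖((2⁻¹:ℝ):𝕜) • (y - w)‖ = ‖w - y‖ / 2 := by
        rw [norm_smul, RCLike.norm_ofReal, norm_sub_rev,
          abs_of_pos (by norm_num : (0:ℝ) < 2⁻¹)]
        ring
      have n2 : ‖(((2⁻¹:ℝ):𝕜) - ((s⁻¹:ℝ):𝕜)) • (y + w)‖ ≤ ‖w - y‖ / 2 := by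
        rw [norm_smul, ← RCLike.ofReal_sub, RCLike.norm_ofReal, ← hsdef]
        have habs : |2⁻¹ - s⁻¹| * s = |s - 2| / 2 := by
          calc |2⁻¹ - s⁻¹| * s = |(2⁻¹ - s⁻¹) * s| := by rw [abs_mul, abs_of_pos hspos]
            _ = |(s - 2)/2| := by
                congr 1
                field_simp
            _ = |s - 2|/2 := by rw [abs_div]; norm_num
        have hs2' : |s - 2| ≤ ‖w - y‖ := by
          have h2y : ‖y + y‖ = 2 := by
            rw [show y + y = (2:𝕜) • y by module, norm_smul, RCLike.norm_ofNat, hy]; norm_num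
          have := abs_norm_sub_norm_le (y + w) (y + y)
          rw [h2y, show y + w - (y + y) = w - y by abel] at this
          exact this
        calc |2⁻¹ - s⁻¹| * s = |s - 2| / 2 := habs
          _ ≤ ‖w - y‖ / 2 := by linarith
      calc ‖y - a‖ = ‖((2⁻¹:ℝ):𝕜) • (y - w) + (((2⁻¹:ℝ):𝕜) - ((s⁻¹:ℝ):𝕜)) • (y + w)‖ := by
            rw [e2]
        _ ≤ ‖((2⁻¹:ℝ):𝕜) • (y - w)‖ + ‖(((2⁻¹:ℝ):𝕜) - ((s⁻¹:ℝ):𝕜)) • (y + w)‖ := norm_add_le _ _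
        _ ≤ ‖w - y‖ := by rw [n1]; linarith
    have e3 : (refl' 𝕜 a).comp (refl' 𝕜 y) h - h
        = refl' 𝕜 a (refl' 𝕜 y h - refl' 𝕜 a h) := by
      rw [map_sub, ContinuousLinearMap.comp_apply, refl'_invol a ha]
    rw [e3, refl'_norm a ha]
    calc ‖refl' 𝕜 y h - refl' 𝕜 a h‖ ≤ 4 * ‖y - a‖ * ‖h‖ := refl'_sub_bound y a h hy ha
      _ ≤ 4 * ‖w - y‖ * ‖h‖ := by
          have := norm_nonneg h
          nlinarith

end Aux

set_option maxHeartbeats 1000000 in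
theorem stmt_9 (𝕜 X H : Type*) [RCLike 𝕜] [NormedAddCommGroup X] [NormedSpace 𝕜 X]
    [CompleteSpace X] [NormedAddCommGroup H] [InnerProductSpace 𝕜 H] [CompleteSpace H]
    (hX : UniformlySmooth 𝕜 X) :
    BPBppBilin 𝕜 X H 𝕜 ↔ BPBpp 𝕜 X (H →L[𝕜] 𝕜) := by
  constructor
  · -- bilinear BPBpp implies operator BPBpp
    intro hbil ε hε
    obtain ⟨η, hη, hBmain⟩ := hbil ε hε
    refine ⟨min η (1/2), lt_min hη (by norm_num), ?_⟩
    intro T x hT hx hTx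
    have hTx2 : (1:ℝ)/2 < ‖T x‖ := by
      have := min_le_right η (1/2); linarith
    set z := (InnerProductSpace.toDual 𝕜 H).symm (T x) with hzdef
    have hz : ‖z‖ = ‖T x‖ := LinearIsometryEquiv.norm_map _ _
    have hzpos : 0 < ‖z‖ := by rw [hz]; linarith
    set y := ((‖z‖⁻¹ : ℝ) : 𝕜) • z with hydef
    have hy : ‖y‖ = 1 := by
      rw [hydef, norm_smul, RCLike.norm_ofReal, abs_of_pos (inv_pos.mpr hzpos)]
      field_simp
    have hTxy : T x y = ((‖z‖ : ℝ) : 𝕜) := by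
      have h0 : T x y = ⟪z, y⟫_𝕜 := (InnerProductSpace.toDual_symm_apply).symm
      rw [h0, hydef, inner_smul_right, inner_self_eq_norm_sq_to_K]
      rw [← RCLike.ofReal_pow, ← RCLike.ofReal_mul]
      congr 1
      field_simp
    have hTxy2 : 1 - η < ‖T x y‖ := by
      rw [hTxy, RCLike.norm_ofReal, abs_of_pos hzpos, hz]
      have := min_le_left η (1/2)
      linarith
    obtain ⟨A, hA1, hA2, hA3⟩ := hBmain T x y hT hx hy hTxy2
    refine ⟨A, hA1, le_antisymm ?_ ?_, hA3⟩
    · calc ‖A x‖ ≤ ‖A‖ * ‖x‖ := A.le_opNorm x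
        _ = 1 := by rw [hA1, hx, mul_one]
    · calc (1:ℝ) = ‖A x y‖ := hA2.symm
        _ ≤ ‖A x‖ * ‖y‖ := (A x).le_opNorm y
        _ = ‖A x‖ := by rw [hy, mul_one]
  · -- operator BPBpp implies bilinear BPBpp
    intro hop ε hε
    set ε' := min (min (ε/2) (ε^2/400)) (1/4) with hε'def
    have hε' : 0 < ε' :=
      lt_min (lt_min (by linarith) (by positivity)) (by norm_num)
    have hε'quarter : ε' ≤ 1/4 := min_le_right _ _
    have hε'half : ε' ≤ ε/2 := le_trans (min_le_left _ _) (min_le_left _ _)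
    have hsqrt : Real.sqrt ε' ≤ ε/20 := by
      have h1 : ε' ≤ ε^2/400 := le_trans (min_le_left _ _) (min_le_right _ _)
      calc Real.sqrt ε' ≤ Real.sqrt (ε^2/400) := Real.sqrt_le_sqrt h1
        _ = ε/20 := by
            rw [show ε^2/400 = (ε/20)^2 by ring]
            exact Real.sqrt_sq (by positivity)
    clear_value ε'
    obtain ⟨η₁, hη₁, hSmain⟩ := hop ε' hε'
    refine ⟨min η₁ ε', lt_min hη₁ hε', ?_⟩
    intro B x y hB hx hy hBxy
    have hη₁' : 1 - η₁ < ‖B x‖ := by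
      have h1 : ‖B x y‖ ≤ ‖B x‖ := by
        calc ‖B x y‖ ≤ ‖B x‖ * ‖y‖ := (B x).le_opNorm y
          _ = ‖B x‖ := by rw [hy, mul_one]
      have := min_le_left η₁ ε'
      linarith
    obtain ⟨S, hS1, hSx, hSB⟩ := hSmain B x hB hx hη₁'
    set z := (InnerProductSpace.toDual 𝕜 H).symm (S x) with hzdef
    have hz1 : ‖z‖ = 1 := by
      rw [hzdef, LinearIsometryEquiv.norm_map]; exact hSx
    have hfapp : ∀ h : H, S x h = ⟪z, h⟫_𝕜 := fun h =>
      (InnerProductSpace.toDual_symm_apply).symm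
    clear_value z
    set c := ⟪z, y⟫_𝕜 with hcdef
    clear_value c
    have hc : 1 - 2*ε' < ‖c‖ := by
      have h1 : ‖S x y - B x y‖ ≤ ‖S - B‖ := by
        calc ‖S x y - B x y‖ = ‖((S - B) x) y‖ := by
              rw [ContinuousLinearMap.sub_apply, ContinuousLinearMap.sub_apply]
          _ ≤ ‖(S - B) x‖ * ‖y‖ := ((S - B) x).le_opNorm y
          _ = ‖(S - B) x‖ := by rw [hy, mul_one]
          _ ≤ ‖S - B‖ * ‖x‖ := (S - B).le_opNorm x
          _ = ‖S - B‖ := by rw [hx, mul_one]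
      have h2 : ‖B x y‖ - ‖S x y‖ ≤ ‖S x y - B x y‖ := by
        have := norm_sub_norm_le (B x y) (S x y)
        rw [norm_sub_rev] at this
        linarith
      have h4 : ‖c‖ = ‖S x y‖ := by rw [hcdef, ← hfapp y]
      have := min_le_right η₁ ε'
      linarith
    have hcpos : 0 < ‖c‖ := by linarith
    set lam : 𝕜 := c / ((‖c‖ : ℝ) : 𝕜) with hlamdef
    clear_value lam
    have hlam : ‖lam‖ = 1 := by
      rw [hlamdef, norm_div, RCLike.norm_ofReal, abs_of_pos hcpos, div_self hcpos.ne']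
    set w := lam • z with hwdef
    clear_value w
    have hw : ‖w‖ = 1 := by rw [hwdef, norm_smul, hlam, hz1, mul_one]
    have hwy : ⟪w, y⟫_𝕜 = ((‖c‖ : ℝ) : 𝕜) := by
      rw [hwdef, inner_smul_left, ← hcdef, hlamdef]
      rw [map_div₀, RCLike.conj_ofReal]
      rw [div_mul_eq_mul_div, RCLike.conj_mul]
      rw [show ((‖c‖:ℝ):𝕜)^2 = (((‖c‖^2 : ℝ)):𝕜) by push_cast; ring]
      rw [← RCLike.ofReal_div]
      congr 1
      field_simp
    have hwynormsq : ‖w - y‖^2 = 2 - 2*‖c‖ := by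
      rw [@norm_sub_sq 𝕜, hwy, hw, hy, RCLike.ofReal_re]
      ring
    have hwylt : ‖w - y‖ < 2 * Real.sqrt ε' := by
      have h1 : ‖w - y‖^2 < 4 * ε' := by rw [hwynormsq]; linarith
      have h2 : ‖w - y‖ = Real.sqrt (‖w - y‖^2) := (Real.sqrt_sq (norm_nonneg _)).symm
      rw [h2]
      calc Real.sqrt (‖w - y‖^2) < Real.sqrt (4 * ε') := Real.sqrt_lt_sqrt (by positivity) h1
        _ = 2 * Real.sqrt ε' := by
            rw [show (4:ℝ) * ε' = (2:ℝ)^2 * ε' by ring, Real.sqrt_mul (by positivity),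
              Real.sqrt_sq (by norm_num)]
    obtain ⟨U, hUy, hUiso, hUnear⟩ :=
      rotation_exists y w hy hw ‖c‖ (norm_nonneg c) hwy
    obtain ⟨A, hAapp⟩ : ∃ A : X →L[𝕜] H →L[𝕜] 𝕜, ∀ (x' : X) (h : H), A x' h = S x' (U h) :=
      ⟨((ContinuousLinearMap.compL 𝕜 H H 𝕜).flip U).comp S, fun _ _ => rfl⟩
    have hAxyval : A x y = lam := by
      rw [hAapp x y, hUy, hfapp w, hwdef, inner_smul_right, inner_self_eq_norm_sq_to_K,
        hz1]
      push_cast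
      ring
    have hAxy : ‖A x y‖ = 1 := by rw [hAxyval, hlam]
    have hAle : ‖A‖ ≤ 1 := by
      refine ContinuousLinearMap.opNorm_le_bound _ zero_le_one fun x' => ?_
      rw [one_mul]
      refine ContinuousLinearMap.opNorm_le_bound _ (norm_nonneg x') fun h => ?_
      calc ‖A x' h‖ = ‖S x' (U h)‖ := by rw [hAapp]
        _ ≤ ‖S x'‖ * ‖U h‖ := (S x').le_opNorm (U h)
        _ = ‖S x'‖ * ‖h‖ := by rw [hUiso]
        _ ≤ ‖x'‖ * ‖h‖ := by
            have h1 : ‖S x'‖ ≤ ‖x'‖ := by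
              have := S.le_opNorm x'
              rw [hS1, one_mul] at this
              exact this
            exact mul_le_mul_of_nonneg_right h1 (norm_nonneg h)
    have hA1 : ‖A‖ = 1 := by
      refine le_antisymm hAle ?_
      calc (1:ℝ) = ‖A x y‖ := hAxy.symm
        _ ≤ ‖A x‖ * ‖y‖ := (A x).le_opNorm y
        _ = ‖A x‖ := by rw [hy, mul_one]
        _ ≤ ‖A‖ * ‖x‖ := A.le_opNorm x
        _ = ‖A‖ := by rw [hx, mul_one]
    have hAS : ‖A - S‖ ≤ 4 * ‖w - y‖ := by
      refine ContinuousLinearMap.opNorm_le_bound _ (by positivity) fun x' => ?_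
      refine ContinuousLinearMap.opNorm_le_bound _ (by positivity) fun h => ?_
      have e1 : (A - S) x' h = S x' (U h - h) := by
        rw [ContinuousLinearMap.sub_apply, ContinuousLinearMap.sub_apply, hAapp, map_sub]
      calc ‖(A - S) x' h‖ = ‖S x' (U h - h)‖ := by rw [e1]
        _ ≤ ‖S x'‖ * ‖U h - h‖ := (S x').le_opNorm _
        _ ≤ ‖x'‖ * (4 * ‖w - y‖ * ‖h‖) := by
            have h1 : ‖S x'‖ ≤ ‖x'‖ := by
              have := S.le_opNorm x'
              rw [hS1, one_mul] at this
              exact this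
            exact mul_le_mul h1 (hUnear h) (norm_nonneg _) (norm_nonneg x')
        _ = 4 * ‖w - y‖ * ‖x'‖ * ‖h‖ := by ring
    refine ⟨A, hA1, hAxy, ?_⟩
    have hABle : ‖A - B‖ ≤ ‖A - S‖ + ‖S - B‖ := by
      calc ‖A - B‖ = dist A B := (dist_eq_norm A B).symm
        _ ≤ dist A S + dist S B := dist_triangle A S B
        _ = ‖A - S‖ + ‖S - B‖ := by
            rw [dist_eq_norm A S, dist_eq_norm S B]
    have h4wy : 4 * ‖w - y‖ < 8 * (ε/20) := by linarith
    calc ‖A - B‖ ≤ ‖A - S‖ + ‖S - B‖ := hABle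
      _ < 8 * (ε/20) + ε/2 := by linarith
      _ < ε := by linarith
end

section
/- If the pair (X × Y, 𝕂) has the Bishop-Phelps-Bollobás point property for bilinear forms, then the pair (X, Y*) has the Bishop-Phelps-Bollobás point property for operators. -/
open RCLike


theorem stmt_10 (𝕜 X Y : Type*) [RCLike 𝕜] [NormedAddCommGroup X] [NormedSpace 𝕜 X]
    [CompleteSpace X] [NormedAddCommGroup Y] [NormedSpace 𝕜 Y] [CompleteSpace Y]
    (h : BPBppBilin 𝕜 X Y 𝕜) : BPBpp 𝕜 X (Y →L[𝕜] 𝕜) := by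
  intro ε hε
  obtain ⟨η, hη, hB⟩ := h ε hε
  refine ⟨min η (1/2), lt_min hη (by norm_num), ?_⟩
  intro T x hT hx hTx
  -- T x is a functional with norm > 1 - min η (1/2); find a near-norming unit vector
  have h1 : (0:ℝ) < 1 - min η (1/2) := by
    have : min η (1/2) ≤ 1/2 := min_le_right _ _
    linarith
  obtain ⟨y, hy1, hy2⟩ := (T x).exists_lt_apply_of_lt_opNorm hTx
  have hfy : (0:ℝ) < ‖T x y‖ := lt_trans h1 hy2
  have hyne : y ≠ 0 := by
    intro h0; rw [h0, map_zero, norm_zero] at hfy; exact lt_irrefl _ hfy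
  have hyn : (0:ℝ) < ‖y‖ := norm_pos_iff.mpr hyne
  set y' : Y := ((‖y‖ : 𝕜))⁻¹ • y with hy'
  have hcoe : ‖((‖y‖ : 𝕜))⁻¹‖ = ‖y‖⁻¹ := by
    rw [norm_inv, RCLike.norm_ofReal, abs_of_pos hyn]
  have hy'norm : ‖y'‖ = 1 := by
    rw [hy', norm_smul, hcoe, inv_mul_cancel₀ (ne_of_gt hyn)]
  have happ : ‖T x y'‖ = ‖y‖⁻¹ * ‖T x y‖ := by
    rw [hy', map_smul, norm_smul, hcoe]
  have hbig : 1 - η < ‖T x y'‖ := by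
    have h2 : ‖T x y‖ ≤ ‖T x y'‖ := by
      rw [happ]
      have : (1:ℝ) ≤ ‖y‖⁻¹ := (one_le_inv_iff₀).mpr ⟨hyn, le_of_lt hy1⟩
      nlinarith [norm_nonneg (T x y)]
    have h3 : 1 - η ≤ 1 - min η (1/2) := by
      have : min η (1/2) ≤ η := min_le_left _ _
      linarith
    linarith
  obtain ⟨A, hA, hAxy, hAT⟩ := hB T x y' hT hx hy'norm hbig
  refine ⟨A, hA, ?_, hAT⟩
  have hle : ‖A x‖ ≤ 1 := by
    calc ‖A x‖ ≤ ‖A‖ * ‖x‖ := A.le_opNorm x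
    _ = 1 := by rw [hA, hx, mul_one]
  have hge : 1 ≤ ‖A x‖ := by
    calc (1:ℝ) = ‖A x y'‖ := hAxy.symm
    _ ≤ ‖A x‖ * ‖y'‖ := (A x).le_opNorm y'
    _ = ‖A x‖ := by rw [hy'norm, mul_one]
  linarith
end

section
/- Let X, Y be Banach spaces and K a compact Hausdorff space. Under the isometric identification φ(t)(x,y) = B(x,y)(t) between B(X × Y, C(K)) and τ_p-continuous functions K → B(X × Y, 𝕂), a bilinear mapping B: X × Y → C(K) is compact (i.e., B(B_X × B_Y) is precompact in C(K)) if and only if the corresponding function φ: K → B(X × Y, 𝕂) is norm-continuous. -/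
open RCLike

-- Auxiliary lemma: a bilinear form bounded by `c` on the product of unit balls has norm `≤ c`.
lemma opNorm_le_of_unit_balls {𝕜 X Y : Type*} [RCLike 𝕜] [NormedAddCommGroup X]
    [NormedSpace 𝕜 X] [NormedAddCommGroup Y] [NormedSpace 𝕜 Y]
    (C : X →L[𝕜] Y →L[𝕜] 𝕜) {c : ℝ} (hc : 0 ≤ c)
    (h : ∀ x ∈ Metric.closedBall (0:X) 1, ∀ y ∈ Metric.closedBall (0:Y) 1, ‖C x y‖ ≤ c) :
    ‖C‖ ≤ c := by
  refine ContinuousLinearMap.opNorm_le_bound _ hc fun x => ?_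
  refine ContinuousLinearMap.opNorm_le_bound _ (by positivity) fun y => ?_
  rcases eq_or_ne x 0 with rfl | hx
  · simp
  rcases eq_or_ne y 0 with rfl | hy
  · simp
  have hxn : (0:ℝ) < ‖x‖ := norm_pos_iff.mpr hx
  have hyn : (0:ℝ) < ‖y‖ := norm_pos_iff.mpr hy
  set a : 𝕜 := (‖x‖ : 𝕜)⁻¹ with ha
  set b : 𝕜 := (‖y‖ : 𝕜)⁻¹ with hb
  have hna : ‖a‖ = ‖x‖⁻¹ := by
    rw [ha, norm_inv, RCLike.norm_ofReal, abs_of_pos hxn]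
  have hnb : ‖b‖ = ‖y‖⁻¹ := by
    rw [hb, norm_inv, RCLike.norm_ofReal, abs_of_pos hyn]
  have hax : a • x ∈ Metric.closedBall (0:X) 1 := by
    rw [Metric.mem_closedBall, dist_zero_right, norm_smul, hna,
      inv_mul_cancel₀ hxn.ne']
  have hby : b • y ∈ Metric.closedBall (0:Y) 1 := by
    rw [Metric.mem_closedBall, dist_zero_right, norm_smul, hnb,
      inv_mul_cancel₀ hyn.ne']
  have key := h _ hax _ hby
  have hsm : C (a • x) (b • y) = (a * b) • C x y := by
    simp only [map_smul, ContinuousLinearMap.smul_apply, smul_smul, mul_comm]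
  rw [hsm, norm_smul, norm_mul, hna, hnb] at key
  have hre : ‖C x y‖ = ‖x‖ * ‖y‖ * (‖x‖⁻¹ * ‖y‖⁻¹ * ‖C x y‖) := by
    field_simp
  rw [hre]
  calc ‖x‖ * ‖y‖ * (‖x‖⁻¹ * ‖y‖⁻¹ * ‖C x y‖) ≤ ‖x‖ * ‖y‖ * c :=
        mul_le_mul_of_nonneg_left key (by positivity)
    _ = c * ‖x‖ * ‖y‖ := by ring

theorem stmt_14 (𝕜 X Y K : Type*) [RCLike 𝕜] [NormedAddCommGroup X] [NormedSpace 𝕜 X]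
    [CompleteSpace X] [NormedAddCommGroup Y] [NormedSpace 𝕜 Y] [CompleteSpace Y]
    [TopologicalSpace K] [CompactSpace K] [T2Space K]
    (B : X →L[𝕜] Y →L[𝕜] C(K, 𝕜)) (φ : K → (X →L[𝕜] Y →L[𝕜] 𝕜))
    (hφ : ∀ (t : K) (x : X) (y : Y), φ t x y = B x y t) :
    TotallyBounded (Set.image2 (fun x y => B x y)
        (Metric.closedBall (0:X) 1) (Metric.closedBall (0:Y) 1)) ↔
      Continuous φ := by
  set S : Set C(K, 𝕜) := Set.image2 (fun x y => B x y)
      (Metric.closedBall (0:X) 1) (Metric.closedBall (0:Y) 1) with hS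
  -- Key fact A: pointwise oscillation of members of `S` is controlled by `‖φ t - φ s‖`.
  have factA : ∀ (t s : K), ∀ f ∈ S, dist (f t) (f s) ≤ dist (φ t) (φ s) := by
    rintro t s f ⟨x, hx, y, hy, rfl⟩
    have hx1 : ‖x‖ ≤ 1 := by simpa [dist_zero_right] using hx
    have hy1 : ‖y‖ ≤ 1 := by simpa [dist_zero_right] using hy
    have : dist (B x y t) (B x y s) = ‖(φ t - φ s) x y‖ := by
      simp [dist_eq_norm, hφ]
    rw [this]
    calc ‖(φ t - φ s) x y‖ ≤ ‖φ t - φ s‖ * ‖x‖ * ‖y‖ :=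
          ContinuousLinearMap.le_opNorm₂ _ _ _
      _ ≤ ‖φ t - φ s‖ * 1 * 1 := by
          gcongr <;> positivity
      _ = ‖φ t - φ s‖ := by ring
      _ = dist (φ t) (φ s) := (dist_eq_norm (φ t) (φ s)).symm
  constructor
  · -- totally bounded ⇒ φ continuous
    intro hTB
    rw [continuous_iff_continuousAt]
    intro t0
    have goal : ∀ ε > 0, ∀ᶠ t in nhds t0, dist (φ t) (φ t0) < ε := by
      intro ε hε
      obtain ⟨F, hFfin, hFcov⟩ := Metric.totallyBounded_iff.mp hTB (ε/5) (by positivity)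
      have hev : ∀ᶠ t in nhds t0, ∀ f ∈ F, dist (f t) (f t0) < ε/5 := by
        rw [Filter.eventually_all_finite hFfin]
        intro f _
        have : ContinuousAt (fun t => f t) t0 := f.continuous.continuousAt
        exact Metric.tendsto_nhds.mp this (ε/5) (by positivity)
      filter_upwards [hev] with t ht
      have hb : ‖φ t - φ t0‖ ≤ 3 * (ε/5) := by
        refine opNorm_le_of_unit_balls _ (by positivity) fun x hx y hy => ?_
        have hfS : (B x y : C(K,𝕜)) ∈ S := Set.mem_image2_of_mem hx hy
        obtain ⟨g, hgF, hg⟩ := Set.mem_iUnion₂.mp (hFcov hfS)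
        have hg' : dist (B x y) g < ε/5 := Metric.mem_ball.mp hg
        have h1 : dist (B x y t) (g t) ≤ dist (B x y) g :=
          ContinuousMap.dist_apply_le_dist t
        have h2 : dist (B x y t0) (g t0) ≤ dist (B x y) g :=
          ContinuousMap.dist_apply_le_dist t0
        have h3 : dist (g t) (g t0) < ε/5 := ht g hgF
        have hrw : ‖(φ t - φ t0) x y‖ = dist (B x y t) (B x y t0) := by
          simp [dist_eq_norm, hφ]
        rw [hrw]
        calc dist (B x y t) (B x y t0)
            ≤ dist (B x y t) (g t) + dist (g t) (g t0) + dist (g t0) (B x y t0) :=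
              dist_triangle4 _ _ _ _
          _ ≤ ε/5 + ε/5 + ε/5 := by
              have h2' : dist (g t0) (B x y t0) ≤ dist (B x y) g := by
                rw [dist_comm]; exact h2
              linarith [h2'.trans hg'.le, h3.le, h1.trans hg'.le]
          _ = 3 * (ε/5) := by ring
      calc dist (φ t) (φ t0) = ‖φ t - φ t0‖ := dist_eq_norm (φ t) (φ t0)
        _ ≤ 3 * (ε/5) := hb
        _ < ε := by linarith
    exact Metric.tendsto_nhds.mpr goal
  · -- φ continuous ⇒ totally bounded
    intro hcont
    rw [Metric.totallyBounded_iff]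
    intro ε hε
    set δ := ε/4 with hδ
    have hδpos : (0:ℝ) < δ := by positivity
    -- open cover of K by sets where φ varies by less than δ
    have hcov : (Set.univ : Set K) ⊆ ⋃ t0 : K, φ ⁻¹' Metric.ball (φ t0) δ := by
      intro t _
      exact Set.mem_iUnion.mpr ⟨t, by simp [Metric.mem_ball, hδpos]⟩
    obtain ⟨s, hscov⟩ := isCompact_univ.elim_finite_subcover
      (fun t0 : K => φ ⁻¹' Metric.ball (φ t0) δ)
      (fun t0 => (Metric.isOpen_ball).preimage hcont) hcov
    -- map to finitely many coordinates
    let P : C(K, 𝕜) → (s → 𝕜) := fun f i => f i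
    have hPS : TotallyBounded (P '' S) := by
      refine TotallyBounded.subset ?_ (isCompact_closedBall (0 : s → 𝕜) ‖B‖).totallyBounded
      rintro _ ⟨f, ⟨x, hx, y, hy, rfl⟩, rfl⟩
      have hx1 : ‖x‖ ≤ 1 := by simpa [dist_zero_right] using hx
      have hy1 : ‖y‖ ≤ 1 := by simpa [dist_zero_right] using hy
      have hfB : ‖(B x y : C(K,𝕜))‖ ≤ ‖B‖ := by
        calc ‖(B x y : C(K,𝕜))‖ ≤ ‖B‖ * ‖x‖ * ‖y‖ := ContinuousLinearMap.le_opNorm₂ _ _ _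
          _ ≤ ‖B‖ * 1 * 1 := by gcongr <;> positivity
          _ = ‖B‖ := by ring
      rw [Metric.mem_closedBall, dist_zero_right]
      refine (pi_norm_le_iff_of_nonneg (le_trans (norm_nonneg _) hfB)).mpr fun i => ?_
      calc ‖(B x y : C(K,𝕜)) i‖ ≤ ‖(B x y : C(K,𝕜))‖ := (B x y).norm_coe_le_norm i
        _ ≤ ‖B‖ := hfB
    obtain ⟨T, hTsub, hTfin, hTcov⟩ := totallyBounded_iff_subset.mp hPS
      {p : (s → 𝕜) × (s → 𝕜) | dist p.1 p.2 < δ} (Metric.dist_mem_uniformity hδpos)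
    -- choose representatives in S for each center
    choose rep hrepS hrepP using fun c (hc : c ∈ T) => hTsub hc
    refine ⟨(fun c : {c // c ∈ T} => rep c.1 c.2) '' Set.univ,
      (Set.finite_univ_iff.mpr hTfin.to_subtype).image _, ?_⟩
    intro f hf
    obtain ⟨c, hcT, hfc⟩ := Set.mem_iUnion₂.mp (hTcov (Set.mem_image_of_mem P hf))
    have hfc' : dist (P f) c < δ := hfc
    set g := rep c hcT with hg
    have hgS : g ∈ S := hrepS c hcT
    have hPg : P g = c := hrepP c hcT
    refine Set.mem_iUnion₂.mpr ⟨g, ⟨⟨c, hcT⟩, Set.mem_univ _, rfl⟩, ?_⟩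
    rw [Metric.mem_ball, ContinuousMap.dist_lt_iff hε]
    intro t
    obtain ⟨i, his, hti⟩ := Set.mem_iUnion₂.mp (hscov (Set.mem_univ t))
    have hφti : dist (φ t) (φ i) < δ := by
      simpa [Metric.mem_ball] using hti
    have h1 : dist (f t) (f i) < δ := lt_of_le_of_lt (factA t i f hf) hφti
    have h3 : dist (g i) (g t) < δ := by
      have := lt_of_le_of_lt (factA t i g hgS) hφti
      rwa [dist_comm]
    have h2 : dist (f i) (g i) < δ := by
      have h2' : dist (f i) (g i) ≤ dist (P f) (P g) := dist_le_pi_dist (P f) (P g) ⟨i, his⟩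
      rw [hPg] at h2'
      exact lt_of_le_of_lt h2' hfc'
    calc dist (f t) (g t) ≤ dist (f t) (f i) + dist (f i) (g i) + dist (g i) (g t) :=
          dist_triangle4 _ _ _ _
      _ < δ + δ + δ := by linarith
      _ < ε := by rw [hδ]; linarith
end
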